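/- arXiv:2411.19294 — 5 statements merged into one kernel-verified Lean document; each statement's English description precedes it below -/
import Mathlib

section
/- For each natural number r ≥ 2, the sum over all tuples (j_1,...,j_r) of natural numbers with j_1 + 2j_2 + ... + r·j_r = r and j_1 + ... + j_r even of the reciprocals 1/(∏_{k=1}^r k^{j_k} · j_k!) equals 1/2. For r = 0 it equals 1 and for r = 1 it equals 0. -/
open Finset Multiset

def partitionTuples (r : ℕ) : Finset (Fin r → ℕ) :=
  (Fintype.piFinset fun _ : Fin r => Finset.range (r + 1)).filter
    (fun j => ∑ i : Fin r, ((i : ℕ) + 1) * j i = r)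

def wt (r : ℕ) (j : Fin r → ℕ) : ℚ :=
  (∏ i : Fin r, (((i : ℕ) + 1 : ℚ) ^ (j i) * (Nat.factorial (j i) : ℚ)))⁻¹

def Qw (w : ℚ) (m : Multiset ℕ) : ℚ :=
  w ^ (Multiset.card m) *
    ((m.prod : ℚ) * ∏ k ∈ m.toFinset, (Nat.factorial (m.count k) : ℚ))⁻¹

lemma Qw_erase (w : ℚ) (m : Multiset ℕ) (k : ℕ) (hk : k ∈ m)
    (hpos : ∀ i ∈ m, 0 < i) :
    ((k : ℚ) * (m.count k : ℚ)) * Qw w m = w * Qw w (m.erase k) := by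
  set m' := m.erase k with hm'
  have hcons : k ::ₘ m' = m := Multiset.cons_erase hk
  have hcard : Multiset.card m = Multiset.card m' + 1 := by
    rw [← hcons]; simp
  have hprod : (m.prod : ℚ) = (k : ℚ) * (m'.prod : ℚ) := by
    rw [← hcons]; push_cast [Multiset.prod_cons]; ring
  have hcount : m.count k = m'.count k + 1 := by
    rw [← hcons]; simp
  have herase : (m'.toFinset).erase k = (m.toFinset).erase k := by
    rw [← hcons, Multiset.toFinset_cons, Finset.erase_insert_eq_erase]
  have hcounts : ∀ t ∈ (m.toFinset).erase k, m'.count t = m.count t := by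
    intro t ht
    exact Multiset.count_erase_of_ne (Finset.ne_of_mem_erase ht) m
  set R : ℚ := ∏ t ∈ (m.toFinset).erase k, (Nat.factorial (m.count t) : ℚ) with hR
  have hP : (∏ t ∈ m.toFinset, (Nat.factorial (m.count t) : ℚ))
      = (Nat.factorial (m.count k) : ℚ) * R :=
    (Finset.mul_prod_erase m.toFinset (fun t => (Nat.factorial (m.count t) : ℚ))
      (Multiset.mem_toFinset.2 hk)).symm
  have hR' : (∏ t ∈ (m'.toFinset).erase k, (Nat.factorial (m'.count t) : ℚ)) = R := by
    rw [herase]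
    exact Finset.prod_congr rfl fun t ht => by rw [hcounts t ht]
  have hP' : (∏ t ∈ m'.toFinset, (Nat.factorial (m'.count t) : ℚ))
      = (Nat.factorial (m'.count k) : ℚ) * R := by
    by_cases h : k ∈ m'.toFinset
    · rw [← hR', Finset.mul_prod_erase m'.toFinset
        (fun t => (Nat.factorial (m'.count t) : ℚ)) h]
    · have h0 : m'.count k = 0 := by
        simpa [Multiset.count_eq_zero] using fun hc => h (Multiset.mem_toFinset.2 hc)
      rw [h0, ← hR', Finset.erase_eq_of_notMem h]
      simp
  -- nonvanishing
  have hk0 : (k : ℚ) ≠ 0 := by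
    exact_mod_cast (hpos k hk).ne'
  have hprod0 : (m'.prod : ℚ) ≠ 0 := by
    have : 0 < m'.prod :=
      Multiset.prod_pos fun x hx => hpos x (Multiset.mem_of_mem_erase hx)
    exact_mod_cast this.ne'
  have hR0 : R ≠ 0 := by
    rw [hR]
    exact Finset.prod_ne_zero_iff.2 fun t _ => by
      exact_mod_cast (Nat.factorial_pos _).ne'
  have hfac0 : (Nat.factorial (m'.count k) : ℚ) ≠ 0 := by
    exact_mod_cast (Nat.factorial_pos _).ne'
  rw [Qw, Qw, hP, hP', hcard, hprod, hcount, Nat.factorial_succ]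
  generalize ((m'.prod : ℕ) : ℚ) = P at hprod0 ⊢
  push_cast
  field_simp
  ring

def Tw (r : ℕ) (w : ℚ) : ℚ := ∑ p : Nat.Partition r, Qw w p.parts

lemma sum_count_mul (m : Multiset ℕ) :
    ∑ a ∈ m.toFinset, ((a : ℚ) * (m.count a : ℚ)) = (m.sum : ℚ) := by
  have h := Finset.sum_multiset_map_count m (id : ℕ → ℕ)
  simp only [Multiset.map_id', smul_eq_mul, id] at h
  rw [h]
  push_cast
  exact Finset.sum_congr rfl fun a _ => by ring

lemma Tw_rec (r : ℕ) (w : ℚ) :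
    (r : ℚ) * Tw r w = w * ∑ k ∈ Finset.Icc 1 r, Tw (r - k) w := by
  rw [Tw, Finset.mul_sum]
  have L : ∀ p : Nat.Partition r, (r : ℚ) * Qw w p.parts
      = ∑ k ∈ p.parts.toFinset, ((k : ℚ) * (p.parts.count k : ℚ)) * Qw w p.parts := by
    intro p
    rw [← Finset.sum_mul, sum_count_mul, p.parts_sum]
  rw [Finset.sum_congr rfl fun p _ => L p, Finset.sum_sigma']
  have R : w * ∑ k ∈ Finset.Icc 1 r, Tw (r - k) w
      = ∑ x ∈ (Finset.Icc 1 r).sigma (fun k => (Finset.univ : Finset (Nat.Partition (r - k)))),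
          w * Qw w x.2.parts := by
    rw [Finset.sum_sigma, Finset.mul_sum]
    exact Finset.sum_congr rfl fun k _ => by rw [Tw, Finset.mul_sum]
  rw [R]
  refine Finset.sum_bij'
    (i := fun (x : Σ _ : Nat.Partition r, ℕ) hx =>
      (⟨x.2, ⟨x.1.parts.erase x.2,
        fun hi => x.1.parts_pos (Multiset.mem_of_mem_erase hi), ?_⟩⟩ :
          Σ k : ℕ, Nat.Partition (r - k)))
    (j := fun (y : Σ k : ℕ, Nat.Partition (r - k)) hy =>
      (⟨⟨y.1 ::ₘ y.2.parts, ?_, ?_⟩, y.1⟩ : Σ _ : Nat.Partition r, ℕ))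
    ?_ ?_ ?_ ?_ ?_
  case refine_1 =>
    have hx2 : x.2 ∈ x.1.parts := by
      have := (Finset.mem_sigma.1 hx).2
      exact Multiset.mem_toFinset.1 this
    have hsum : x.2 + (x.1.parts.erase x.2).sum = r := by
      rw [← Multiset.sum_cons, Multiset.cons_erase hx2, x.1.parts_sum]
    omega
  case refine_2 =>
    intro i hi
    rcases Multiset.mem_cons.1 hi with h | h
    · subst h
      exact (Finset.mem_Icc.1 (Finset.mem_sigma.1 hy).1).1
    · exact y.2.parts_pos h
  case refine_3 =>
    have h1 : y.1 ≤ r := (Finset.mem_Icc.1 (Finset.mem_sigma.1 hy).1).2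
    rw [Multiset.sum_cons, y.2.parts_sum]
    omega
  case refine_4 =>
    intro a ha
    have ha2 : a.2 ∈ a.1.parts := Multiset.mem_toFinset.1 (Finset.mem_sigma.1 ha).2
    refine Finset.mem_sigma.2 ⟨Finset.mem_Icc.2 ⟨a.1.parts_pos ha2, ?_⟩, Finset.mem_univ _⟩
    exact (Multiset.le_sum_of_mem ha2).trans_eq a.1.parts_sum
  case refine_5 =>
    intro a ha
    refine Finset.mem_sigma.2 ⟨Finset.mem_univ _, ?_⟩
    simp
  case refine_6 =>
    intro a ha
    obtain ⟨p, k⟩ := a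
    have ha2 : k ∈ p.parts := Multiset.mem_toFinset.1 (Finset.mem_sigma.1 ha).2
    exact Sigma.ext (Nat.Partition.ext (Multiset.cons_erase ha2)) HEq.rfl
  case refine_7 =>
    intro a ha
    obtain ⟨k, p⟩ := a
    exact Sigma.ext rfl (heq_of_eq (Nat.Partition.ext (Multiset.erase_cons_head _ _)))
  case refine_8 =>
    intro a ha
    have ha2 : a.2 ∈ a.1.parts := Multiset.mem_toFinset.1 (Finset.mem_sigma.1 ha).2
    exact Qw_erase w a.1.parts a.2 ha2 fun i hi => a.1.parts_pos hi

lemma Tw_zero (w : ℚ) : Tw 0 w = 1 := by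
  rw [Tw, Fintype.sum_unique]
  simp [Qw]
lemma Tw_one (w : ℚ) : Tw 1 w = w := by
  rw [Tw, Fintype.sum_unique]
  simp [Qw]
lemma card_le_sum_of_pos (m : Multiset ℕ) (h : ∀ x ∈ m, 0 < x) : Multiset.card m ≤ m.sum := by
  induction m using Multiset.induction_on with
  | empty => simp
  | cons a s ih =>
    simp only [Multiset.card_cons, Multiset.sum_cons]
    have ha : 0 < a := h a (Multiset.mem_cons_self a s)
    have := ih fun x hx => h x (Multiset.mem_cons_of_mem hx)
    omega
lemma Tw_rec' (r : ℕ) (w : ℚ) :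
    (r : ℚ) * Tw r w = w * ∑ m ∈ Finset.range r, Tw m w := by
  rw [Tw_rec]
  congr 1
  rw [← Finset.Ico_add_one_right_eq_Icc, Finset.sum_Ico_eq_sum_range, Nat.add_sub_cancel]
  rw [Finset.sum_congr rfl fun i _ => by rw [show r - (1 + i) = r - 1 - i by omega]]
  exact Finset.sum_range_reflect (fun m => Tw m w) r

lemma Tw_one_val (r : ℕ) : Tw r 1 = 1 := by
  induction r using Nat.strong_induction_on with
  | _ r ih =>
    rcases eq_or_ne r 0 with h | h
    · subst h; exact Tw_zero 1
    · have hrec := Tw_rec' r 1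
      rw [one_mul, Finset.sum_congr rfl (fun m hm => ih m (Finset.mem_range.1 hm))] at hrec
      simp only [Finset.sum_const, Finset.card_range, nsmul_eq_mul, mul_one] at hrec
      have hr0 : (r : ℚ) ≠ 0 := Nat.cast_ne_zero.2 h
      field_simp at hrec
      exact hrec

lemma Tw_neg_one_val (r : ℕ) :
    Tw r (-1) = if r = 0 then 1 else if r = 1 then -1 else 0 := by
  induction r using Nat.strong_induction_on with
  | _ r ih =>
    rcases eq_or_ne r 0 with h | h
    · subst h; simpa using Tw_zero (-1)
    rcases eq_or_ne r 1 with h1 | h1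
    · subst h1; simpa using Tw_one (-1)
    have h2 : 2 ≤ r := by omega
    have hrec := Tw_rec' r (-1)
    rw [Finset.sum_congr rfl (fun m hm => ih m (Finset.mem_range.1 hm))] at hrec
    have hsum : ∑ m ∈ Finset.range r,
        (if m = 0 then (1:ℚ) else if m = 1 then -1 else 0) = 0 := by
      have : ∀ m, (if m = 0 then (1:ℚ) else if m = 1 then -1 else 0)
          = (if m = 0 then (1:ℚ) else 0) + (if m = 1 then (-1:ℚ) else 0) := by
        intro m
        rcases eq_or_ne m 0 with rfl | hm0
        · simp
        · rcases eq_or_ne m 1 with rfl | hm1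
          · simp
          · simp [hm0, hm1]
      rw [Finset.sum_congr rfl fun m _ => this m, Finset.sum_add_distrib]
      rw [Finset.sum_ite_eq' (Finset.range r) 0 (fun _ => (1:ℚ)),
        Finset.sum_ite_eq' (Finset.range r) 1 (fun _ => (-1:ℚ))]
      rw [if_pos (Finset.mem_range.2 (by omega)), if_pos (Finset.mem_range.2 (by omega))]
      ring
    rw [hsum, mul_zero] at hrec
    have hr0 : (r : ℚ) ≠ 0 := Nat.cast_ne_zero.2 h
    have : Tw r (-1) = 0 := by
      rcases mul_eq_zero.1 hrec with h' | h'
      · exact absurd h' hr0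
      · exact h'
    simp [this, h, h1]

def Mj (r : ℕ) (j : Fin r → ℕ) : Multiset ℕ :=
  ∑ i : Fin r, Multiset.replicate (j i) ((i : ℕ) + 1)

lemma Mj_count (r : ℕ) (j : Fin r → ℕ) (i0 : Fin r) :
    (Mj r j).count ((i0 : ℕ) + 1) = j i0 := by
  rw [Mj, Multiset.count_sum']
  rw [Fintype.sum_eq_single i0]
  · simp [Multiset.count_replicate]
  · intro i hi
    rw [Multiset.count_replicate, if_neg]
    intro hne
    exact hi (Fin.ext (by omega))

lemma Mj_mem (r : ℕ) (j : Fin r → ℕ) (n : ℕ) (hn : n ∈ Mj r j) :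
    ∃ i : Fin r, n = (i : ℕ) + 1 := by
  rw [Mj, Multiset.mem_sum] at hn
  obtain ⟨i, _, hm⟩ := hn
  exact ⟨i, Multiset.eq_of_mem_replicate hm⟩

lemma Mj_sum (r : ℕ) (j : Fin r → ℕ) :
    (Mj r j).sum = ∑ i : Fin r, ((i : ℕ) + 1) * j i := by
  rw [Mj, Multiset.sum_sum]
  exact Finset.sum_congr rfl fun i _ => by
    rw [Multiset.sum_replicate, smul_eq_mul, mul_comm]

lemma Mj_card (r : ℕ) (j : Fin r → ℕ) :
    Multiset.card (Mj r j) = ∑ i : Fin r, j i := by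
  rw [Mj, show ∀ s : Finset (Fin r), ∀ f : Fin r → Multiset ℕ, Multiset.card (∑ i ∈ s, f i) = ∑ i ∈ s, Multiset.card (f i) from fun s f => map_sum Multiset.cardHom f s]
  exact Finset.sum_congr rfl fun i _ => Multiset.card_replicate _ _

lemma Mj_prod (r : ℕ) (j : Fin r → ℕ) :
    (Mj r j).prod = ∏ i : Fin r, ((i : ℕ) + 1) ^ (j i) := by
  rw [Mj, Multiset.prod_sum]
  exact Finset.prod_congr rfl fun i _ => Multiset.prod_replicate _ _

lemma Mj_toFinset_sub (r : ℕ) (j : Fin r → ℕ) :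
    (Mj r j).toFinset ⊆ Finset.image (fun i : Fin r => (i : ℕ) + 1) Finset.univ := by
  intro k hk
  obtain ⟨i, rfl⟩ := Mj_mem r j k (Multiset.mem_toFinset.1 hk)
  exact Finset.mem_image.2 ⟨i, Finset.mem_univ i, rfl⟩

lemma Mj_factorials (r : ℕ) (j : Fin r → ℕ) :
    ∏ k ∈ (Mj r j).toFinset, Nat.factorial ((Mj r j).count k)
      = ∏ i : Fin r, Nat.factorial (j i) := by
  rw [Finset.prod_subset (Mj_toFinset_sub r j) (fun k _ hk => by
    rw [Multiset.count_eq_zero_of_notMem (fun hm => hk (Multiset.mem_toFinset.2 hm))]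
    rfl)]
  rw [Finset.prod_image (fun a _ b _ h => Fin.ext (by omega : (a:ℕ) = b))]
  exact Finset.prod_congr rfl fun i _ => by rw [Mj_count]

lemma Qw_Mj (w : ℚ) (r : ℕ) (j : Fin r → ℕ) :
    w ^ (∑ i : Fin r, j i) * wt r j = Qw w (Mj r j) := by
  rw [Qw, wt, Mj_card]
  congr 2
  have h1 := Mj_prod r j
  have h2 := Mj_factorials r j
  rw [show (∏ k ∈ (Mj r j).toFinset, (Nat.factorial ((Mj r j).count k) : ℚ))
      = ((∏ k ∈ (Mj r j).toFinset, Nat.factorial ((Mj r j).count k) : ℕ) : ℚ) by push_cast; rfl,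
    h2, h1]
  push_cast
  rw [← Finset.prod_mul_distrib]

lemma parts_sum_count (r : ℕ) (p : Nat.Partition r) :
    ∑ i : Fin r, ((i : ℕ) + 1) * p.parts.count ((i : ℕ) + 1) = r := by
  classical
  set m := p.parts with hm
  have hmem : ∀ k ∈ m, ∃ i : Fin r, k = (i : ℕ) + 1 := by
    intro k hk
    have h1 : 0 < k := p.parts_pos hk
    have h2 : k ≤ r := (Multiset.le_sum_of_mem hk).trans_eq p.parts_sum
    exact ⟨⟨k - 1, by omega⟩, by simp; omega⟩
  have hsub : m.toFinset ⊆ Finset.image (fun i : Fin r => (i : ℕ) + 1) Finset.univ := by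
    intro k hk
    obtain ⟨i, rfl⟩ := hmem k (Multiset.mem_toFinset.1 hk)
    exact Finset.mem_image.2 ⟨i, Finset.mem_univ i, rfl⟩
  have h := Finset.sum_multiset_map_count m (id : ℕ → ℕ)
  simp only [Multiset.map_id', smul_eq_mul, id] at h
  have h2 : ∑ k ∈ m.toFinset, m.count k * k
      = ∑ k ∈ Finset.image (fun i : Fin r => (i : ℕ) + 1) Finset.univ, m.count k * k := by
    refine Finset.sum_subset hsub fun k _ hk => ?_
    rw [Multiset.count_eq_zero_of_notMem (fun hmm => hk (Multiset.mem_toFinset.2 hmm)), zero_mul]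
  have h3 : ∑ k ∈ Finset.image (fun i : Fin r => (i : ℕ) + 1) Finset.univ, m.count k * k
      = ∑ i : Fin r, m.count ((i : ℕ) + 1) * ((i : ℕ) + 1) :=
    Finset.sum_image (fun a _ b _ hab => Fin.ext (by omega : (a : ℕ) = b))
  have := p.parts_sum
  rw [hm] at *
  calc ∑ i : Fin r, ((i : ℕ) + 1) * p.parts.count ((i : ℕ) + 1)
      = ∑ i : Fin r, p.parts.count ((i : ℕ) + 1) * ((i : ℕ) + 1) :=
        Finset.sum_congr rfl fun i _ => mul_comm _ _
    _ = ∑ k ∈ p.parts.toFinset, p.parts.count k * k := by rw [h2, h3]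
    _ = p.parts.sum := h.symm
    _ = r := p.parts_sum

lemma tuple_sum (r : ℕ) (w : ℚ) :
    ∑ j ∈ partitionTuples r, w ^ (∑ i : Fin r, j i) * wt r j = Tw r w := by
  classical
  rw [Tw]
  refine Finset.sum_bij'
    (i := fun (j : Fin r → ℕ) hj =>
      (⟨Mj r j, fun hn => ?_, ?_⟩ : Nat.Partition r))
    (j := fun (p : Nat.Partition r) _ => fun i : Fin r => p.parts.count ((i : ℕ) + 1))
    ?_ ?_ ?_ ?_ ?_
  case refine_1 =>
    obtain ⟨i, rfl⟩ := Mj_mem r j _ hn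
    omega
  case refine_2 =>
    rw [Mj_sum]
    exact (Finset.mem_filter.1 hj).2
  case refine_3 =>
    intro j hj
    exact Finset.mem_univ _
  case refine_4 =>
    intro p _
    refine Finset.mem_filter.2 ⟨Fintype.mem_piFinset.2 fun i => Finset.mem_range.2 ?_,
      parts_sum_count r p⟩
    have h1 : p.parts.count ((i : ℕ) + 1) ≤ Multiset.card p.parts := Multiset.count_le_card _ _
    have h2 : Multiset.card p.parts ≤ p.parts.sum :=
      card_le_sum_of_pos _ fun x hx => p.parts_pos hx
    have := p.parts_sum
    show p.parts.count ((i : ℕ) + 1) < r + 1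
    omega
  case refine_5 =>
    intro j hj
    funext i0
    exact Mj_count r j i0
  case refine_6 =>
    intro p _
    refine Nat.Partition.ext ?_
    refine Multiset.ext.2 fun n => ?_
    by_cases hn : ∃ i0 : Fin r, n = (i0 : ℕ) + 1
    · obtain ⟨i0, rfl⟩ := hn
      exact Mj_count r _ i0
    · rw [Multiset.count_eq_zero_of_notMem, Multiset.count_eq_zero_of_notMem]
      · intro hmem
        have h1 : 0 < n := p.parts_pos hmem
        have h2 : n ≤ r := (Multiset.le_sum_of_mem hmem).trans_eq p.parts_sum
        exact hn ⟨⟨n - 1, by omega⟩, by simp; omega⟩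
      · intro hmem
        exact hn (Mj_mem r _ n hmem)
  case refine_7 =>
    intro j hj
    exact Qw_Mj w r j

theorem sum_partition_reciprocals_even (r : ℕ) :
    ∑ j ∈ (partitionTuples r).filter (fun j => Even (∑ i : Fin r, j i)), wt r j =
      if r = 0 then 1 else if r = 1 then 0 else 1 / 2 := by
  have key1 := tuple_sum r 1
  have key2 := tuple_sum r (-1)
  have hsplit : ∑ j ∈ (partitionTuples r).filter (fun j => Even (∑ i : Fin r, j i)), wt r j
      = (Tw r 1 + Tw r (-1)) / 2 := by
    have hpt : ∀ j : Fin r → ℕ, (if Even (∑ i : Fin r, j i) then wt r j else 0)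
        = ((1 : ℚ) ^ (∑ i : Fin r, j i) * wt r j
            + (-1 : ℚ) ^ (∑ i : Fin r, j i) * wt r j) / 2 := by
      intro j
      by_cases h : Even (∑ i : Fin r, j i)
      · rw [if_pos h, h.neg_one_pow, one_pow]; ring
      · rw [if_neg h, (Nat.not_even_iff_odd.1 h).neg_one_pow, one_pow]; ring
    rw [Finset.sum_filter, Finset.sum_congr rfl fun j _ => hpt j, ← Finset.sum_div,
      Finset.sum_add_distrib, key1, key2]
  rw [hsplit, Tw_one_val, Tw_neg_one_val]
  rcases eq_or_ne r 0 with rfl | h0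
  · norm_num
  rcases eq_or_ne r 1 with rfl | h1
  · norm_num
  rw [if_neg h0, if_neg h1, if_neg h0, if_neg h1]
  norm_num
end

section
/- For all natural numbers r, u, m, n: D(r,u,m,n) = r! · D_{r,u,m}(n), where D(r,u,m,n) is the number of permutations σ of {1,...,r+n} such that σ(x) = y for exactly u pairs (x,y) with 1 ≤ x,y ≤ r and σ(t) = t for exactly m elements t with r+1 ≤ t ≤ r+n, and D_{r,u,m}(n) is the number of permutations σ of {1,...,r+n} such that any two distinct elements of {1,...,r} lie in disjoint cycles of σ, exactly u elements of {1,...,r} are fixed points of σ, and exactly m elements of {r+1,...,r+n} are fixed points of σ. -/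
open scoped Classical

/-- Parity of a permutation: `0` if even, `1` if odd. -/
noncomputable def parity {α : Type*} [Fintype α] [DecidableEq α] (σ : Equiv.Perm α) : ℕ :=
  if Equiv.Perm.sign σ = 1 then 0 else 1

/-- The set `𝒟(r,u,m,n)`: permutations `σ` of `{0,…,r+n-1}` (modelling `{1,…,r+n}`,
with the first `r` elements playing the role of `{1,…,r}`) such that `σ x = y` for exactly
`u` pairs `(x,y)` with `x, y` among the first `r` elements, and exactly `m` elements among
the last `n` elements are fixed points. -/
noncomputable def Dgen (r u m n : ℕ) : Finset (Equiv.Perm (Fin (r + n))) :=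
  Finset.univ.filter (fun σ =>
    ((Finset.univ : Finset (Fin (r + n))).filter
      (fun x : Fin (r + n) => (x : ℕ) < r ∧ ((σ x : ℕ) < r))).card = u ∧
    ((Finset.univ : Finset (Fin (r + n))).filter
      (fun t : Fin (r + n) => r ≤ (t : ℕ) ∧ σ t = t)).card = m)

/-- The set `𝒟_{r,u,m}(n)`: permutations `σ` of `{0,…,r+n-1}` in which any two distinct
elements among the first `r` lie in disjoint cycles, exactly `u` of the first `r` elements
are fixed points, and exactly `m` of the last `n` elements are fixed points. -/
noncomputable def Drum (r u m n : ℕ) : Finset (Equiv.Perm (Fin (r + n))) :=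
  Finset.univ.filter (fun σ =>
    (∀ x y : Fin (r + n), (x : ℕ) < r → (y : ℕ) < r → x ≠ y → ¬ σ.SameCycle x y) ∧
    ((Finset.univ : Finset (Fin (r + n))).filter
      (fun z : Fin (r + n) => (z : ℕ) < r ∧ σ z = z)).card = u ∧
    ((Finset.univ : Finset (Fin (r + n))).filter
      (fun t : Fin (r + n) => r ≤ (t : ℕ) ∧ σ t = t)).card = m)

/-- The number of disjoint cycles of `σ` containing at least one of the first `r` elements:
we count the distinct sets `{y : y is in the same cycle of σ as x}` for `x` among the
first `r` elements. -/
noncomputable def touchingCycles (r n : ℕ) (σ : Equiv.Perm (Fin (r + n))) : ℕ :=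
  (((Finset.univ : Finset (Fin (r + n))).filter (fun x : Fin (r + n) => (x : ℕ) < r)).image
    (fun x => (Finset.univ : Finset (Fin (r + n))).filter (fun y => σ.SameCycle x y))).card

/-- The set of `r`-derangements of length `r+n`: fixed-point-free permutations in which
any two distinct elements among the first `r` lie in disjoint cycles. -/
noncomputable def rDerSet (r n : ℕ) : Finset (Equiv.Perm (Fin (r + n))) :=
  Finset.univ.filter (fun σ =>
    (∀ x, σ x ≠ x) ∧
    (∀ x y : Fin (r + n), (x : ℕ) < r → (y : ℕ) < r → x ≠ y → ¬ σ.SameCycle x y))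

/-- `D_r(n)`, the number of `r`-derangements. -/
noncomputable def Dr (r n : ℕ) : ℕ := (rDerSet r n).card

/-- `D_r^{(i)}(n)`, the number of `r`-derangements of parity `i`. -/
noncomputable def Dri (r i n : ℕ) : ℕ :=
  ((rDerSet r n).filter (fun σ => parity σ = i)).card

/-! ### Auxiliary development for `Dgen_card_eq` -/

section AuxDev

open Equiv Finset

variable {r n : ℕ}

/-- Extend a permutation of the first `r` elements to a permutation of `Fin (r+n)`. -/
private noncomputable def extP {r n : ℕ}
    (π : Equiv.Perm {x : Fin (r + n) // (x : ℕ) < r}) : Equiv.Perm (Fin (r + n)) :=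
  π.extendDomain (Equiv.refl _)

private lemma extP_small (π : Equiv.Perm {x : Fin (r + n) // (x : ℕ) < r})
    {x : Fin (r + n)} (hx : (x : ℕ) < r) : extP π x = ↑(π ⟨x, hx⟩) := by
  simpa [extP] using π.extendDomain_apply_subtype (Equiv.refl _) hx

private lemma extP_large (π : Equiv.Perm {x : Fin (r + n) // (x : ℕ) < r})
    {x : Fin (r + n)} (hx : ¬ (x : ℕ) < r) : extP π x = x :=
  π.extendDomain_apply_not_subtype (Equiv.refl _) hx

private lemma extP_inv (π : Equiv.Perm {x : Fin (r + n) // (x : ℕ) < r}) :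
    (extP π)⁻¹ = extP π⁻¹ := rfl

private lemma ret_exists (τ : Equiv.Perm (Fin (r + n))) {x : Fin (r + n)}
    (hx : (x : ℕ) < r) : ∃ k, 0 < k ∧ (((τ ^ k) x : Fin (r + n)) : ℕ) < r :=
  ⟨orderOf τ, orderOf_pos τ, by rw [pow_orderOf_eq_one]; simpa⟩

/-- The first-return exponent of `τ` at a small element `x`. -/
private noncomputable def frk (τ : Equiv.Perm (Fin (r + n))) (x : Fin (r + n))
    (hx : (x : ℕ) < r) : ℕ := Nat.find (ret_exists τ hx)

private lemma frk_pos (τ : Equiv.Perm (Fin (r + n))) (x : Fin (r + n))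
    (hx : (x : ℕ) < r) : 0 < frk τ x hx := (Nat.find_spec (ret_exists τ hx)).1

private lemma frk_small (τ : Equiv.Perm (Fin (r + n))) (x : Fin (r + n))
    (hx : (x : ℕ) < r) : (((τ ^ frk τ x hx) x : Fin (r + n)) : ℕ) < r :=
  (Nat.find_spec (ret_exists τ hx)).2

private lemma frk_min (τ : Equiv.Perm (Fin (r + n))) (x : Fin (r + n))
    (hx : (x : ℕ) < r) {j : ℕ} (h0 : 0 < j) (hj : j < frk τ x hx) :
    ¬ (((τ ^ j) x : Fin (r + n)) : ℕ) < r :=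
  fun hs => Nat.find_min (ret_exists τ hx) hj ⟨h0, hs⟩

private lemma frk_eq (τ : Equiv.Perm (Fin (r + n))) (x : Fin (r + n))
    (hx : (x : ℕ) < r) {k : ℕ} (hk : 0 < k) (hks : (((τ ^ k) x : Fin (r + n)) : ℕ) < r)
    (hmin : ∀ j, 0 < j → j < k → ¬ (((τ ^ j) x : Fin (r + n)) : ℕ) < r) :
    frk τ x hx = k := by
  refine le_antisymm (Nat.find_le ⟨hk, hks⟩) ?_
  by_contra h
  push_neg at h
  exact hmin _ (frk_pos τ x hx) h (frk_small τ x hx)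

/-- The first-return map of `τ` on the small elements. -/
private noncomputable def Fpt (τ : Equiv.Perm (Fin (r + n)))
    (a : {x : Fin (r + n) // (x : ℕ) < r}) : {x : Fin (r + n) // (x : ℕ) < r} :=
  ⟨(τ ^ frk τ a.1 a.2) a.1, frk_small τ a.1 a.2⟩

private lemma Fpt_aux (τ : Equiv.Perm (Fin (r + n)))
    {a b : {x : Fin (r + n) // (x : ℕ) < r}} (h : Fpt τ a = Fpt τ b)
    (hle : frk τ a.1 a.2 ≤ frk τ b.1 b.2) : a = b := by
  have h' : (τ ^ frk τ a.1 a.2) a.1 = (τ ^ frk τ b.1 b.2) b.1 := congrArg Subtype.val h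
  have hk : (τ ^ frk τ a.1 a.2) a.1
      = (τ ^ frk τ a.1 a.2) ((τ ^ (frk τ b.1 b.2 - frk τ a.1 a.2)) b.1) := by
    rw [h', ← Equiv.Perm.mul_apply, ← pow_add, Nat.add_sub_cancel' hle]
  have ha : a.1 = (τ ^ (frk τ b.1 b.2 - frk τ a.1 a.2)) b.1 := (Equiv.injective _) hk
  rcases eq_or_lt_of_le hle with heq | hlt
  · have h0 : frk τ b.1 b.2 - frk τ a.1 a.2 = 0 := by omega
    rw [h0, pow_zero] at ha
    exact Subtype.ext (by simpa using ha)
  · have hp := frk_pos τ a.1 a.2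
    exact absurd (ha ▸ a.2) (frk_min τ b.1 b.2 (by omega) (by omega))

private lemma Fpt_inj (τ : Equiv.Perm (Fin (r + n))) : Function.Injective (Fpt τ) := by
  intro a b h
  rcases le_total (frk τ a.1 a.2) (frk τ b.1 b.2) with hle | hle
  · exact Fpt_aux τ h hle
  · exact (Fpt_aux τ h.symm hle).symm

private noncomputable def Fperm (τ : Equiv.Perm (Fin (r + n))) :
    Equiv.Perm {x : Fin (r + n) // (x : ℕ) < r} :=
  Equiv.ofBijective (Fpt τ) (Finite.injective_iff_bijective.mp (Fpt_inj τ))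

private lemma Fperm_apply (τ : Equiv.Perm (Fin (r + n)))
    (a : {x : Fin (r + n) // (x : ℕ) < r}) : Fperm τ a = Fpt τ a := rfl

private lemma pow_fix {σ : Equiv.Perm (Fin (r + n))} {x : Fin (r + n)} {k : ℕ}
    (hk : (σ ^ k) x = x) (j : ℕ) : (σ ^ j) x = (σ ^ (j % k)) x := by
  have hq : ∀ q, ((σ ^ k) ^ q) x = x := by
    intro q
    induction q with
    | zero => simp
    | succ q ih => rw [pow_succ, Equiv.Perm.mul_apply, hk, ih]
  conv_lhs => rw [← Nat.mod_add_div j k]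
  rw [pow_add, Equiv.Perm.mul_apply, pow_mul, hq]

private lemma same_small {σ : Equiv.Perm (Fin (r + n))}
    (hσ : ∀ x y : Fin (r + n), (x : ℕ) < r → (y : ℕ) < r → x ≠ y → ¬ σ.SameCycle x y)
    {x z : Fin (r + n)} (hx : (x : ℕ) < r) (hz : (z : ℕ) < r) (h : σ.SameCycle x z) :
    x = z := by
  by_contra hne
  exact hσ x z hx hz hne h

/-! #### The "cut" direction: from an arbitrary `τ` to a permutation with distinct cycles -/

private lemma cut_apply_small (τ : Equiv.Perm (Fin (r + n))) {y : Fin (r + n)}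
    (h : ((τ y : Fin (r + n)) : ℕ) < r) :
    ((extP (Fperm τ))⁻¹ * τ) y = ↑((Fperm τ)⁻¹ ⟨τ y, h⟩) := by
  rw [Equiv.Perm.mul_apply, extP_inv, extP_small _ h]

private lemma cut_apply_large (τ : Equiv.Perm (Fin (r + n))) {y : Fin (r + n)}
    (h : ¬ ((τ y : Fin (r + n)) : ℕ) < r) :
    ((extP (Fperm τ))⁻¹ * τ) y = τ y := by
  rw [Equiv.Perm.mul_apply, extP_inv, extP_large _ h]

private lemma cut_pow_lt (τ : Equiv.Perm (Fin (r + n))) {x : Fin (r + n)}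
    (hx : (x : ℕ) < r) : ∀ j, j < frk τ x hx →
      (((extP (Fperm τ))⁻¹ * τ) ^ j) x = (τ ^ j) x := by
  intro j
  induction j with
  | zero => simp
  | succ j ih =>
    intro hj
    have hns : ¬ (((τ ^ (j + 1)) x : Fin (r + n)) : ℕ) < r :=
      frk_min τ x hx (Nat.succ_pos j) hj
    rw [pow_succ', Equiv.Perm.mul_apply, ih (by omega), pow_succ' τ, Equiv.Perm.mul_apply]
    exact cut_apply_large τ (by rwa [← Equiv.Perm.mul_apply, ← pow_succ'])

private lemma cut_pow_frk (τ : Equiv.Perm (Fin (r + n))) {x : Fin (r + n)}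
    (hx : (x : ℕ) < r) : (((extP (Fperm τ))⁻¹ * τ) ^ frk τ x hx) x = x := by
  have hp := frk_pos τ x hx
  have hk : frk τ x hx = (frk τ x hx - 1) + 1 := by omega
  have hτk : τ ((τ ^ (frk τ x hx - 1)) x) = (τ ^ frk τ x hx) x := by
    rw [← Equiv.Perm.mul_apply, ← pow_succ', ← hk]
  rw [hk, pow_succ', Equiv.Perm.mul_apply, cut_pow_lt τ hx _ (by omega),
    Equiv.Perm.mul_apply, hτk, extP_inv, extP_small _ (frk_small τ x hx)]
  show ((Fperm τ)⁻¹ (Fperm τ ⟨x, hx⟩) : Fin (r + n)) = x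
  rw [Equiv.Perm.inv_def, Equiv.symm_apply_apply]

private lemma cut_small_pow (τ : Equiv.Perm (Fin (r + n))) {x : Fin (r + n)}
    (hx : (x : ℕ) < r) (j : ℕ)
    (hs : (((((extP (Fperm τ))⁻¹ * τ) ^ j) x : Fin (r + n)) : ℕ) < r) :
    (((extP (Fperm τ))⁻¹ * τ) ^ j) x = x := by
  rw [pow_fix (cut_pow_frk τ hx) j] at hs ⊢
  rcases Nat.eq_zero_or_pos (j % frk τ x hx) with h0 | h0
  · rw [h0]; simp
  · have hlt : j % frk τ x hx < frk τ x hx := Nat.mod_lt _ (frk_pos τ x hx)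
    rw [cut_pow_lt τ hx _ hlt] at hs
    exact absurd hs (frk_min τ x hx h0 hlt)

private lemma cut_dc (τ : Equiv.Perm (Fin (r + n))) :
    ∀ x y : Fin (r + n), (x : ℕ) < r → (y : ℕ) < r → x ≠ y →
      ¬ ((extP (Fperm τ))⁻¹ * τ).SameCycle x y := by
  intro x y hx hy hne hsc
  obtain ⟨i, -, hi⟩ := hsc.exists_pow_eq'
  rw [← hi] at hy
  exact hne ((cut_small_pow τ hx i hy).symm.trans hi)

private lemma cut_fix_small (τ : Equiv.Perm (Fin (r + n))) {x : Fin (r + n)}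
    (hx : (x : ℕ) < r) :
    ((extP (Fperm τ))⁻¹ * τ) x = x ↔ ((τ x : Fin (r + n)) : ℕ) < r := by
  constructor
  · intro hfix
    by_contra hns
    rw [cut_apply_large τ hns] at hfix
    rw [hfix] at hns
    exact hns hx
  · intro hs
    have hfrk : frk τ x hx = 1 :=
      frk_eq τ x hx one_pos (by simpa using hs) (fun j h0 hj => by omega)
    have hFp : Fperm τ ⟨x, hx⟩ = ⟨τ x, hs⟩ := by
      apply Subtype.ext
      show (τ ^ frk τ x hx) x = τ x
      rw [hfrk, pow_one]
    rw [cut_apply_small τ hs, ← hFp, Equiv.Perm.inv_def, Equiv.symm_apply_apply]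

private lemma cut_fix_large (τ : Equiv.Perm (Fin (r + n))) {t : Fin (r + n)}
    (ht : ¬ (t : ℕ) < r) :
    ((extP (Fperm τ))⁻¹ * τ) t = t ↔ τ t = t := by
  by_cases hs : ((τ t : Fin (r + n)) : ℕ) < r
  · constructor
    · intro hfix
      rw [cut_apply_small τ hs] at hfix
      exact absurd (hfix ▸ ((Fperm τ)⁻¹ ⟨τ t, hs⟩).2) ht
    · intro hfix
      rw [hfix] at hs
      exact absurd hs ht
  · rw [cut_apply_large τ hs]

/-! #### The "restore" direction -/

private lemma per_exists (σ : Equiv.Perm (Fin (r + n))) (x : Fin (r + n)) :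
    ∃ k, 0 < k ∧ (σ ^ k) x = x :=
  ⟨orderOf σ, orderOf_pos σ, by simp [pow_orderOf_eq_one]⟩

private noncomputable def per (σ : Equiv.Perm (Fin (r + n))) (x : Fin (r + n)) : ℕ :=
  Nat.find (per_exists σ x)

private lemma per_pos (σ : Equiv.Perm (Fin (r + n))) (x : Fin (r + n)) : 0 < per σ x :=
  (Nat.find_spec (per_exists σ x)).1

private lemma per_fix (σ : Equiv.Perm (Fin (r + n))) (x : Fin (r + n)) :
    (σ ^ per σ x) x = x := (Nat.find_spec (per_exists σ x)).2

private lemma per_min (σ : Equiv.Perm (Fin (r + n))) (x : Fin (r + n)) {j : ℕ}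
    (h0 : 0 < j) (hj : j < per σ x) : (σ ^ j) x ≠ x :=
  fun hfix => Nat.find_min (per_exists σ x) hj ⟨h0, hfix⟩

private lemma res_not_small {σ : Equiv.Perm (Fin (r + n))}
    (hσ : ∀ x y : Fin (r + n), (x : ℕ) < r → (y : ℕ) < r → x ≠ y → ¬ σ.SameCycle x y)
    {x : Fin (r + n)} (hx : (x : ℕ) < r) {j : ℕ} (h0 : 0 < j) (hj : j < per σ x) :
    ¬ (((σ ^ j) x : Fin (r + n)) : ℕ) < r := by
  intro hs
  have hsc : σ.SameCycle x ((σ ^ j) x) := ⟨(j : ℤ), by rw [zpow_natCast]⟩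
  exact per_min σ x h0 hj (same_small hσ hx hs hsc).symm

private lemma res_pow_lt {σ : Equiv.Perm (Fin (r + n))}
    (hσ : ∀ x y : Fin (r + n), (x : ℕ) < r → (y : ℕ) < r → x ≠ y → ¬ σ.SameCycle x y)
    (π : Equiv.Perm {x : Fin (r + n) // (x : ℕ) < r})
    {x : Fin (r + n)} (hx : (x : ℕ) < r) :
    ∀ j, j < per σ x → ((extP π * σ) ^ j) x = (σ ^ j) x := by
  intro j
  induction j with
  | zero => simp
  | succ j ih =>
    intro hj
    rw [pow_succ', Equiv.Perm.mul_apply, ih (by omega), pow_succ' σ, Equiv.Perm.mul_apply,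
      Equiv.Perm.mul_apply]
    exact extP_large π (by
      rw [← Equiv.Perm.mul_apply, ← pow_succ']
      exact res_not_small hσ hx (Nat.succ_pos j) hj)

private lemma res_pow_per {σ : Equiv.Perm (Fin (r + n))}
    (hσ : ∀ x y : Fin (r + n), (x : ℕ) < r → (y : ℕ) < r → x ≠ y → ¬ σ.SameCycle x y)
    (π : Equiv.Perm {x : Fin (r + n) // (x : ℕ) < r})
    {x : Fin (r + n)} (hx : (x : ℕ) < r) :
    ((extP π * σ) ^ per σ x) x = ↑(π ⟨x, hx⟩) := by
  have hp := per_pos σ x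
  have hk : per σ x = (per σ x - 1) + 1 := by omega
  rw [hk, pow_succ', Equiv.Perm.mul_apply, res_pow_lt hσ π hx _ (by omega),
    Equiv.Perm.mul_apply]
  have hfix : σ ((σ ^ (per σ x - 1)) x) = x := by
    rw [← Equiv.Perm.mul_apply, ← pow_succ', ← hk]
    exact per_fix σ x
  rw [hfix, extP_small π hx]

private lemma res_Fperm {σ : Equiv.Perm (Fin (r + n))}
    (hσ : ∀ x y : Fin (r + n), (x : ℕ) < r → (y : ℕ) < r → x ≠ y → ¬ σ.SameCycle x y)
    (π : Equiv.Perm {x : Fin (r + n) // (x : ℕ) < r}) :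
    Fperm (extP π * σ) = π := by
  apply Equiv.ext
  intro a
  rw [Fperm_apply]
  apply Subtype.ext
  show ((extP π * σ) ^ frk (extP π * σ) a.1 a.2) a.1 = ↑(π a)
  have hfrk : frk (extP π * σ) a.1 a.2 = per σ a.1 := by
    refine frk_eq _ a.1 a.2 (per_pos σ a.1) ?_ ?_
    · rw [res_pow_per hσ π a.2]
      exact (π ⟨a.1, a.2⟩).2
    · intro j h0 hj
      rw [res_pow_lt hσ π a.2 j hj]
      exact res_not_small hσ a.2 h0 hj
  rw [hfrk, res_pow_per hσ π a.2]

private lemma res_fix_small {σ : Equiv.Perm (Fin (r + n))}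
    (hσ : ∀ x y : Fin (r + n), (x : ℕ) < r → (y : ℕ) < r → x ≠ y → ¬ σ.SameCycle x y)
    (π : Equiv.Perm {x : Fin (r + n) // (x : ℕ) < r})
    {x : Fin (r + n)} (hx : (x : ℕ) < r) :
    (((extP π * σ) x : Fin (r + n)) : ℕ) < r ↔ σ x = x := by
  constructor
  · intro hs
    by_contra hne
    have hnsm : ¬ ((σ x : Fin (r + n)) : ℕ) < r := by
      intro hsm
      exact hne (same_small hσ hx hsm ⟨(1 : ℤ), by simp⟩).symm
    rw [Equiv.Perm.mul_apply, extP_large π hnsm] at hs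
    exact hnsm hs
  · intro hfix
    rw [Equiv.Perm.mul_apply, hfix, extP_small π hx]
    exact (π ⟨x, hx⟩).2

private lemma res_fix_large {σ : Equiv.Perm (Fin (r + n))}
    (π : Equiv.Perm {x : Fin (r + n) // (x : ℕ) < r})
    {t : Fin (r + n)} (ht : ¬ (t : ℕ) < r) :
    (extP π * σ) t = t ↔ σ t = t := by
  by_cases hs : ((σ t : Fin (r + n)) : ℕ) < r
  · rw [Equiv.Perm.mul_apply, extP_small π hs]
    constructor
    · intro h
      exact absurd (h ▸ (π ⟨σ t, hs⟩).2) ht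
    · intro h
      rw [h] at hs
      exact absurd hs ht
  · rw [Equiv.Perm.mul_apply, extP_large π hs]

/-! #### Cardinality of the permutation group on the small elements -/

private def subEquiv (r n : ℕ) : {x : Fin (r + n) // (x : ℕ) < r} ≃ Fin r where
  toFun a := ⟨a.1, a.2⟩
  invFun i := ⟨⟨i.1, Nat.lt_of_lt_of_le i.2 (Nat.le_add_right r n)⟩, i.2⟩
  left_inv a := Subtype.ext (Fin.ext rfl)
  right_inv i := rfl

private lemma card_perm_sub (r n : ℕ) :
    (Finset.univ : Finset (Equiv.Perm {x : Fin (r + n) // (x : ℕ) < r})).card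
      = r.factorial := by
  rw [Finset.card_univ, Fintype.card_perm, Fintype.card_congr (subEquiv r n),
    Fintype.card_fin]

end AuxDev

theorem Dgen_card_eq (r u m n : ℕ) :
    (Dgen r u m n).card = Nat.factorial r * (Drum r u m n).card := by
  classical
  have key : ((Finset.univ : Finset (Equiv.Perm {x : Fin (r + n) // (x : ℕ) < r}))
      ×ˢ Drum r u m n).card = (Dgen r u m n).card := by
    refine Finset.card_nbij' (fun p => extP p.1 * p.2)
      (fun τ => (Fperm τ, (extP (Fperm τ))⁻¹ * τ)) ?_ ?_ ?_ ?_
    · rintro ⟨π, σ⟩ hp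
      simp only [Finset.mem_coe, Finset.mem_product, Finset.mem_univ, true_and, Drum, Finset.mem_filter] at hp
      obtain ⟨hσ, hu, hm⟩ := hp
      simp only [Finset.mem_coe, Dgen, Finset.mem_filter, Finset.mem_univ, true_and]
      constructor
      · rw [← hu]
        refine congrArg Finset.card (Finset.filter_congr ?_)
        intro x _
        exact and_congr_right fun hx => res_fix_small hσ π hx
      · rw [← hm]
        refine congrArg Finset.card (Finset.filter_congr ?_)
        intro t _
        exact and_congr_right fun ht => res_fix_large π (not_lt.2 ht)
    · intro τ hτ
      simp only [Finset.mem_coe, Dgen, Finset.mem_filter, Finset.mem_univ, true_and] at hτ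
      obtain ⟨hu, hm⟩ := hτ
      simp only [Finset.mem_coe, Finset.mem_product, Finset.mem_univ, true_and, Drum, Finset.mem_filter]
      refine ⟨cut_dc τ, ?_, ?_⟩
      · rw [← hu]
        refine congrArg Finset.card (Finset.filter_congr ?_)
        intro x _
        exact and_congr_right fun hx => cut_fix_small τ hx
      · rw [← hm]
        refine congrArg Finset.card (Finset.filter_congr ?_)
        intro t _
        exact and_congr_right fun ht => cut_fix_large τ (not_lt.2 ht)
    · rintro ⟨π, σ⟩ hp
      simp only [Finset.mem_coe, Finset.mem_product, Finset.mem_univ, true_and, Drum, Finset.mem_filter] at hp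
      obtain ⟨hσ, -, -⟩ := hp
      have hF := res_Fperm hσ π
      simp only
      rw [hF, inv_mul_cancel_left]
    · intro τ hτ
      simp only
      rw [mul_inv_cancel_left]
  rw [← key, Finset.card_product, card_perm_sub]
end

section
/- For all natural numbers r, u, m, n, k: D_k(r,u,m,n) = [r, k] · D_{r,u,m}(n), where [r,k] is the unsigned Stirling number of the first kind, D_k(r,u,m,n) counts the permutations in D(r,u,m,n) having exactly k disjoint cycles that contain at least one element of {1,...,r}, and D_{r,u,m}(n) is as defined. -/
open scoped Classical

/-- Unsigned Stirling numbers of the first kind. -/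
def stirling1 : ℕ → ℕ → ℕ
  | 0, 0 => 1
  | 0, _ + 1 => 0
  | _ + 1, 0 => 0
  | n + 1, k + 1 => n * stirling1 n (k + 1) + stirling1 n k

set_option linter.unusedSectionVars false
set_option linter.unreachableTactic false
set_option linter.unusedTactic false
set_option linter.unusedVariables false

namespace DP

open Equiv Equiv.Perm Finset

variable {α : Type*} [Fintype α] [DecidableEq α]

lemma sc_pow (σ : Equiv.Perm α) (a : α) (i : ℕ) : σ.SameCycle a ((σ ^ i) a) :=
  ⟨(i : ℤ), by rw [zpow_natCast]⟩

lemma sc_step (σ : Equiv.Perm α) {a z : α} (h : σ.SameCycle a z) : σ.SameCycle a (σ z) :=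
  h.trans ⟨1, by simp⟩

lemma sc_induct (σ : Equiv.Perm α) (P : α → Prop) {a : α} (h0 : P a)
    (hs : ∀ z, P z → P (σ z)) : ∀ {z : α}, σ.SameCycle a z → P z := by
  have key : ∀ i : ℕ, P ((σ ^ i) a) := by
    intro i
    induction i with
    | zero => simpa using h0
    | succ i ih => rw [pow_succ', Equiv.Perm.mul_apply]; exact hs _ ih
  intro z hz
  obtain ⟨i, -, rfl⟩ := hz.exists_pow_eq'
  exact key i

lemma classEq_iff (σ : Equiv.Perm α) (x y : α) :
    (Finset.univ.filter (fun z => σ.SameCycle x z) =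
      Finset.univ.filter (fun z => σ.SameCycle y z)) ↔ σ.SameCycle x y := by
  constructor
  · intro h
    have hy : y ∈ Finset.univ.filter (fun z => σ.SameCycle y z) :=
      mem_filter.mpr ⟨mem_univ _, SameCycle.refl _ _⟩
    rw [← h] at hy
    exact (mem_filter.mp hy).2
  · intro h
    ext z
    simp only [mem_filter, mem_univ, true_and]
    exact ⟨fun hz => h.symm.trans hz, fun hz => h.trans hz⟩

lemma card_image_congr {β γ : Type*} [DecidableEq β] [DecidableEq γ]
    (f : α → β) (g : α → γ) (h : ∀ x y, f x = f y ↔ g x = g y) :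
    (Finset.univ.image f).card = (Finset.univ.image g).card := by
  apply Finset.card_bij (fun b hb => g (mem_image.mp hb).choose)
  · intro b hb
    exact mem_image_of_mem g (mem_univ _)
  · intro b₁ hb₁ b₂ hb₂ he
    have h1 := (mem_image.mp hb₁).choose_spec.2
    have h2 := (mem_image.mp hb₂).choose_spec.2
    rw [← h1, ← h2]
    exact (h _ _).mpr he
  · intro c hc
    obtain ⟨x, -, rfl⟩ := mem_image.mp hc
    refine ⟨f x, mem_image_of_mem f (mem_univ _), ?_⟩
    exact (h _ _).mp (mem_image.mp (mem_image_of_mem f (mem_univ x))).choose_spec.2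

lemma card_filter_equiv {β γ : Type*} [Fintype β] [Fintype γ]
    (e : β ≃ γ) (P : γ → Prop) [DecidablePred P] [DecidablePred (fun b => P (e b))] :
    (Finset.univ.filter P).card = (Finset.univ.filter (fun b => P (e b))).card := by
  apply (Finset.card_bij (fun b _ => e b) ?_ ?_ ?_).symm
  · intro b hb; simpa using (mem_filter.mp hb).2
  · intro a _ b _ hab; exact e.injective hab
  · intro c hc
    exact ⟨e.symm c, by simpa using (mem_filter.mp hc).2, by simp⟩

/-- number of cycles (including fixed points) -/
noncomputable def cyc {α : Type*} [Fintype α] [DecidableEq α] (τ : Equiv.Perm α) : ℕ :=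
  (Finset.univ.image (fun x => Finset.univ.filter (fun y => τ.SameCycle x y))).card

section PartA
variable {r : ℕ}

lemma pi_zero (p : Fin (r + 1)) (σ : Equiv.Perm (Fin r)) :
    Equiv.Perm.decomposeFin.symm (p, σ) 0 = p :=
  Equiv.Perm.decomposeFin_symm_apply_zero p σ

lemma pi_succ (q : Fin r) (σ : Equiv.Perm (Fin r)) (x : Fin r) :
    Equiv.Perm.decomposeFin.symm (q.succ, σ) x.succ
      = if σ x = q then 0 else (σ x).succ := by
  rw [Equiv.Perm.decomposeFin_symm_apply_succ]
  rcases eq_or_ne (σ x) q with h | h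
  · rw [h, if_pos rfl, Equiv.swap_apply_right]
  · rw [if_neg h]
    exact Equiv.swap_apply_of_ne_of_ne (Fin.succ_ne_zero _)
      (by simpa [Fin.succ_inj] using h)

lemma pi0_succ (σ : Equiv.Perm (Fin r)) (x : Fin r) :
    Equiv.Perm.decomposeFin.symm ((0 : Fin (r+1)), σ) x.succ = (σ x).succ := by
  rw [Equiv.Perm.decomposeFin_symm_apply_succ, Equiv.swap_self]
  rfl

lemma sc_pi_fwd (q : Fin r) (σ : Equiv.Perm (Fin r)) (x : Fin r) {z : Fin (r+1)}
    (h : (Equiv.Perm.decomposeFin.symm (q.succ, σ)).SameCycle x.succ z) :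
    (z = 0 ∧ σ.SameCycle x q) ∨ ∃ y, z = y.succ ∧ σ.SameCycle x y := by
  refine sc_induct _
    (fun z => (z = 0 ∧ σ.SameCycle x q) ∨ ∃ y, z = y.succ ∧ σ.SameCycle x y)
    (Or.inr ⟨x, rfl, SameCycle.refl _ _⟩) ?_ h
  rintro w (⟨rfl, hq⟩ | ⟨y, rfl, hy⟩)
  · rw [pi_zero]
    exact Or.inr ⟨q, rfl, hq⟩
  · rw [pi_succ]
    split_ifs with hc
    · exact Or.inl ⟨rfl, by rw [← hc]; exact sc_step σ hy⟩
    · exact Or.inr ⟨σ y, rfl, sc_step σ hy⟩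

lemma sc_pi_bwd (q : Fin r) (σ : Equiv.Perm (Fin r)) {x y : Fin r}
    (h : σ.SameCycle x y) :
    (Equiv.Perm.decomposeFin.symm (q.succ, σ)).SameCycle x.succ y.succ := by
  set π := Equiv.Perm.decomposeFin.symm (q.succ, σ) with hπ
  refine sc_induct σ (fun w => π.SameCycle x.succ w.succ) (SameCycle.refl _ _) ?_ h
  intro w hw
  have h2 := sc_step π hw
  rw [hπ, pi_succ] at h2
  split_ifs at h2 with hc
  · have h3 := sc_step π h2
    rw [hπ, pi_zero] at h3
    rwa [hc]
  · exact h2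

lemma sc_pi_iff (q : Fin r) (σ : Equiv.Perm (Fin r)) (x y : Fin r) :
    (Equiv.Perm.decomposeFin.symm (q.succ, σ)).SameCycle x.succ y.succ ↔
      σ.SameCycle x y := by
  constructor
  · intro h
    rcases sc_pi_fwd q σ x h with ⟨h0, -⟩ | ⟨y', hy', hs⟩
    · exact absurd h0 (Fin.succ_ne_zero _)
    · rwa [Fin.succ_inj.mp hy'.symm] at hs
  · exact sc_pi_bwd q σ

lemma sc_pi_zero_succ (q : Fin r) (σ : Equiv.Perm (Fin r)) :
    (Equiv.Perm.decomposeFin.symm (q.succ, σ)).SameCycle 0 q.succ :=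
  ⟨1, by rw [zpow_one, pi_zero]⟩

lemma sc_pi0_fwd (σ : Equiv.Perm (Fin r)) (x : Fin r) {z : Fin (r+1)}
    (h : (Equiv.Perm.decomposeFin.symm ((0 : Fin (r+1)), σ)).SameCycle x.succ z) :
    ∃ y, z = y.succ ∧ σ.SameCycle x y := by
  refine sc_induct _ (fun z => ∃ y, z = y.succ ∧ σ.SameCycle x y)
    ⟨x, rfl, SameCycle.refl _ _⟩ ?_ h
  rintro w ⟨y, rfl, hy⟩
  rw [pi0_succ]
  exact ⟨σ y, rfl, sc_step σ hy⟩

lemma sc_pi0_bwd (σ : Equiv.Perm (Fin r)) {x y : Fin r} (h : σ.SameCycle x y) :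
    (Equiv.Perm.decomposeFin.symm ((0 : Fin (r+1)), σ)).SameCycle x.succ y.succ := by
  set π := Equiv.Perm.decomposeFin.symm ((0 : Fin (r+1)), σ) with hπ
  refine sc_induct σ (fun w => π.SameCycle x.succ w.succ) (SameCycle.refl _ _) ?_ h
  intro w hw
  have h2 := sc_step π hw
  rwa [hπ, pi0_succ] at h2

lemma sc_pi0_iff (σ : Equiv.Perm (Fin r)) (x y : Fin r) :
    (Equiv.Perm.decomposeFin.symm ((0 : Fin (r+1)), σ)).SameCycle x.succ y.succ ↔
      σ.SameCycle x y := by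
  constructor
  · intro h
    obtain ⟨y', hy', hs⟩ := sc_pi0_fwd σ x h
    rwa [Fin.succ_inj.mp hy'.symm] at hs
  · exact sc_pi0_bwd σ

lemma sc_pi0_zero (σ : Equiv.Perm (Fin r)) {z : Fin (r+1)}
    (h : (Equiv.Perm.decomposeFin.symm ((0 : Fin (r+1)), σ)).SameCycle 0 z) : z = 0 := by
  refine sc_induct _ (fun w => w = 0) rfl ?_ h
  rintro w rfl
  rw [pi_zero]

lemma image_succ_classes (π : Equiv.Perm (Fin (r+1))) :
    (Finset.univ.image (fun x : Fin (r+1) => Finset.univ.filter (fun y => π.SameCycle x y))) =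
      insert (Finset.univ.filter (fun y => π.SameCycle 0 y))
        (Finset.univ.image (fun x : Fin r => Finset.univ.filter (fun y => π.SameCycle x.succ y))) := by
  rw [Fin.univ_succ, cons_eq_insert, image_insert, map_eq_image, image_image]
  congr 1

lemma cyc_decompose (p : Fin (r+1)) (σ : Equiv.Perm (Fin r)) :
    cyc (Equiv.Perm.decomposeFin.symm (p, σ)) = if p = 0 then cyc σ + 1 else cyc σ := by
  rcases Fin.eq_zero_or_eq_succ p with rfl | ⟨q, rfl⟩
  · rw [if_pos rfl]
    unfold cyc
    rw [image_succ_classes]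
    rw [card_insert_of_notMem]
    · congr 1
      exact card_image_congr _ _ (fun x y =>
        (classEq_iff _ x.succ y.succ).trans
          ((sc_pi0_iff σ x y).trans (classEq_iff σ x y).symm))
    · intro hmem
      obtain ⟨x, -, hx⟩ := mem_image.mp hmem
      have := (classEq_iff _ _ _).mp hx
      exact Fin.succ_ne_zero x (sc_pi0_zero σ this.symm)
  · rw [if_neg (Fin.succ_ne_zero q)]
    unfold cyc
    rw [image_succ_classes]
    rw [insert_eq_self.mpr ?_]
    · exact card_image_congr _ _ (fun x y =>
        (classEq_iff _ x.succ y.succ).trans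
          ((sc_pi_iff q σ x y).trans (classEq_iff σ x y).symm))
    · exact mem_image.mpr ⟨q, mem_univ _, ((classEq_iff _ _ _).mpr (sc_pi_zero_succ q σ)).symm⟩

theorem cyc_count (r k : ℕ) :
    ((Finset.univ : Finset (Equiv.Perm (Fin r))).filter (fun τ => cyc τ = k)).card
      = stirling1 r k := by
  induction r generalizing k with
  | zero =>
    have hc : ∀ τ : Equiv.Perm (Fin 0), cyc τ = 0 := by
      intro τ
      simp [cyc, Finset.univ_eq_empty]
    cases k with
    | zero =>
      rw [filter_true_of_mem (fun τ _ => hc τ)]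
      simp [stirling1, Finset.card_univ]
    | succ k =>
      rw [filter_false_of_mem (fun τ _ => by simp [hc τ])]
      simp [stirling1]
  | succ r ih =>
    cases k with
    | zero =>
      rw [filter_false_of_mem]
      · simp [stirling1]
      · intro τ _
        have hm : Finset.univ.filter (fun y => τ.SameCycle 0 y) ∈
            (Finset.univ.image (fun x : Fin (r+1) =>
              Finset.univ.filter (fun y => τ.SameCycle x y))) :=
          mem_image_of_mem _ (mem_univ _)
        intro hc0
        exact Finset.card_ne_zero_of_mem hm hc0
    | succ k =>
      rw [card_filter_equiv (Equiv.Perm.decomposeFin (n := r)).symm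
        (fun τ : Equiv.Perm (Fin (r+1)) => cyc τ = k + 1)]
      have hsplit : (Finset.univ.filter
            (fun b : Fin (r+1) × Equiv.Perm (Fin r) =>
              cyc (Equiv.Perm.decomposeFin.symm b) = k+1))
          = (({0} : Finset (Fin (r+1))) ×ˢ Finset.univ.filter (fun σ => cyc σ = k)) ∪
            ((Finset.univ.filter (fun p : Fin (r+1) => p ≠ 0)) ×ˢ
              Finset.univ.filter (fun σ => cyc σ = k+1)) := by
        ext ⟨p, σ⟩
        simp only [mem_filter, mem_univ, true_and, mem_union, mem_product, mem_singleton,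
          cyc_decompose]
        by_cases hp : p = 0 <;> simp [hp] <;> omega
      rw [hsplit, card_union_of_disjoint, card_product, card_product]
      · rw [card_singleton, Finset.filter_ne', card_erase_of_mem (mem_univ _),
          card_univ, Fintype.card_fin, ih, ih, one_mul]
        simp [stirling1]
        exact Nat.add_comm _ _
      · rw [Finset.disjoint_left]
        rintro ⟨p, σ⟩ h1 h2
        rw [mem_product] at h1 h2
        rcases h1 with ⟨h1, -⟩
        rcases h2 with ⟨h2, -⟩
        rw [mem_singleton] at h1
        rw [mem_filter] at h2
        exact h2.2 h1

end PartA

section PartB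
variable (r n : ℕ)

def emb : Fin r ≃ {z : Fin (r + n) // (z : ℕ) < r} where
  toFun x := ⟨⟨(x : ℕ), Nat.lt_of_lt_of_le x.isLt (Nat.le_add_right r n)⟩, x.isLt⟩
  invFun z := ⟨((z : Fin (r + n)) : ℕ), z.2⟩
  left_inv x := rfl
  right_inv z := rfl

def ι (x : Fin r) : Fin (r + n) := (emb r n x : Fin (r + n))

noncomputable def EE (τ : Equiv.Perm (Fin r)) : Equiv.Perm (Fin (r + n)) :=
  τ.extendDomain (emb r n)

variable {r n}

@[simp] lemma ι_val (x : Fin r) : ((ι r n x : Fin (r + n)) : ℕ) = (x : ℕ) := rfl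

lemma ι_lt (x : Fin r) : ((ι r n x : Fin (r + n)) : ℕ) < r := x.isLt

lemma ι_inj : Function.Injective (ι r n) := fun a b h =>
  Fin.ext (congrArg (Fin.val (n := r + n)) h)

lemma eq_ι {z : Fin (r + n)} (h : (z : ℕ) < r) : z = ι r n ⟨(z : ℕ), h⟩ :=
  Fin.ext rfl

lemma EE_ι (τ : Equiv.Perm (Fin r)) (x : Fin r) :
    EE r n τ (ι r n x) = ι r n (τ x) :=
  Equiv.Perm.extendDomain_apply_image τ (emb r n) x

lemma EE_notR (τ : Equiv.Perm (Fin r)) {z : Fin (r + n)} (h : ¬ (z : ℕ) < r) :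
    EE r n τ z = z :=
  Equiv.Perm.extendDomain_apply_not_subtype τ (emb r n) h

lemma EE_inv (τ : Equiv.Perm (Fin r)) : (EE r n τ)⁻¹ = EE r n τ⁻¹ :=
  Equiv.Perm.extendDomain_inv τ (emb r n)

lemma EE_mul (τ₁ τ₂ : Equiv.Perm (Fin r)) :
    EE r n (τ₁ * τ₂) = EE r n τ₁ * EE r n τ₂ :=
  (Equiv.Perm.extendDomain_mul (emb r n) τ₁ τ₂).symm

lemma EE_lt_iff (τ : Equiv.Perm (Fin r)) (z : Fin (r + n)) :
    ((EE r n τ z : Fin (r + n)) : ℕ) < r ↔ (z : ℕ) < r := by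
  by_cases h : (z : ℕ) < r
  · rw [eq_ι h, EE_ι]
    exact iff_of_true (ι_lt _) (ι_lt _)
  · rw [EE_notR τ h]

/-- Separation: distinct elements of the first `r` lie in distinct cycles. -/
def Sep (ρ : Equiv.Perm (Fin (r + n))) : Prop :=
  ∀ x y : Fin (r + n), (x : ℕ) < r → (y : ℕ) < r → x ≠ y → ¬ ρ.SameCycle x y

lemma Sep.eq_of {ρ : Equiv.Perm (Fin (r + n))} (hρ : Sep ρ) {x y : Fin (r + n)}
    (hx : (x : ℕ) < r) (hy : (y : ℕ) < r) (h : ρ.SameCycle x y) : x = y := by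
  by_contra hne
  exact hρ x y hx hy hne h

lemma sc_mul_of_rho {ρ : Equiv.Perm (Fin (r + n))} (hρ : Sep ρ)
    (τ : Equiv.Perm (Fin r)) (v : Fin r) {z : Fin (r + n)}
    (h : ρ.SameCycle (ι r n v) z) :
    (EE r n τ * ρ).SameCycle (ι r n v) z := by
  set σ := EE r n τ * ρ with hσ
  have key := sc_induct ρ
    (fun z => ρ.SameCycle (ι r n v) z ∧ σ.SameCycle (ι r n v) z)
    ⟨SameCycle.refl _ _, SameCycle.refl _ _⟩ ?_ h
  · exact key.2
  · rintro z ⟨h1, h2⟩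
    refine ⟨sc_step ρ h1, ?_⟩
    by_cases hR : ((ρ z : Fin (r + n)) : ℕ) < r
    · have : ρ z = ι r n v := (hρ.eq_of (ι_lt v) hR (sc_step ρ h1)).symm
      rw [this]
    · have hz : σ z = ρ z := by
        rw [hσ, Equiv.Perm.mul_apply, EE_notR τ hR]
      rw [← hz]
      exact sc_step σ h2

lemma sc_mul_tau_step {ρ : Equiv.Perm (Fin (r + n))} (hρ : Sep ρ)
    (τ : Equiv.Perm (Fin r)) (v : Fin r) :
    (EE r n τ * ρ).SameCycle (ι r n v) (ι r n (τ v)) := by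
  set σ := EE r n τ * ρ with hσ
  have ha : ρ ((ρ ^ (orderOf ρ - 1)) (ι r n v)) = ι r n v := by
    rw [← Equiv.Perm.mul_apply, ← pow_succ', Nat.sub_add_cancel (orderOf_pos ρ),
      pow_orderOf_eq_one]
    rfl
  have h1 : σ.SameCycle (ι r n v) ((ρ ^ (orderOf ρ - 1)) (ι r n v)) :=
    sc_mul_of_rho hρ τ v (sc_pow ρ _ _)
  have h2 : σ ((ρ ^ (orderOf ρ - 1)) (ι r n v)) = ι r n (τ v) := by
    rw [hσ, Equiv.Perm.mul_apply, ha, EE_ι]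
  have := sc_step σ h1
  rwa [h2] at this

lemma sc_mul_iff {ρ : Equiv.Perm (Fin (r + n))} (hρ : Sep ρ)
    (τ : Equiv.Perm (Fin r)) (x : Fin r) (z : Fin (r + n)) :
    (EE r n τ * ρ).SameCycle (ι r n x) z ↔
      ∃ w : Fin r, τ.SameCycle x w ∧ ρ.SameCycle (ι r n w) z := by
  set σ := EE r n τ * ρ with hσ
  constructor
  · refine sc_induct σ
      (fun z => ∃ w : Fin r, τ.SameCycle x w ∧ ρ.SameCycle (ι r n w) z)
      ⟨x, SameCycle.refl _ _, SameCycle.refl _ _⟩ ?_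
    rintro z ⟨w, hτw, hρw⟩
    have hz : σ z = EE r n τ (ρ z) := rfl
    by_cases hR : ((ρ z : Fin (r + n)) : ℕ) < r
    · have h2 : ρ z = ι r n w := (hρ.eq_of (ι_lt w) hR (sc_step ρ hρw)).symm
      refine ⟨τ w, hτw.trans ⟨1, by simp⟩, ?_⟩
      rw [hz, h2, EE_ι]
    · refine ⟨w, hτw, ?_⟩
      rw [hz, EE_notR τ hR]
      exact sc_step ρ hρw
  · rintro ⟨w, hτw, hρw⟩
    have sub3 : σ.SameCycle (ι r n x) (ι r n w) := by
      refine sc_induct τ (fun w => σ.SameCycle (ι r n x) (ι r n w))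
        (SameCycle.refl _ _) ?_ hτw
      intro w hw
      exact hw.trans (sc_mul_tau_step hρ τ w)
    exact sub3.trans (sc_mul_of_rho hρ τ w hρw)

lemma sc_mul_iff_R {ρ : Equiv.Perm (Fin (r + n))} (hρ : Sep ρ)
    (τ : Equiv.Perm (Fin r)) (x y : Fin r) :
    (EE r n τ * ρ).SameCycle (ι r n x) (ι r n y) ↔ τ.SameCycle x y := by
  constructor
  · intro h
    obtain ⟨w, hτw, hw⟩ := (sc_mul_iff hρ τ x _).mp h
    rwa [ι_inj (hρ.eq_of (ι_lt w) (ι_lt y) hw)] at hτw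
  · intro h
    exact (sc_mul_iff hρ τ x _).mpr ⟨y, h, SameCycle.refl _ _⟩

lemma delta_eq_one {ρ : Equiv.Perm (Fin (r + n))} (hρ : Sep ρ)
    {δ : Equiv.Perm (Fin r)} (hρ' : Sep (EE r n δ * ρ)) : δ = 1 := by
  ext x
  by_contra hne
  have hx : δ x ≠ x := fun h => hne (congrArg Fin.val h)
  have hsc := (sc_mul_iff_R hρ δ x (δ x)).mpr ⟨1, by simp⟩
  exact hρ' (ι r n x) (ι r n (δ x)) (ι_lt x) (ι_lt (δ x))
    (fun h => hx (ι_inj h).symm) hsc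

lemma rho_fix_iff {ρ : Equiv.Perm (Fin (r + n))} (hρ : Sep ρ)
    {z : Fin (r + n)} (hz : (z : ℕ) < r) :
    ((ρ z : Fin (r + n)) : ℕ) < r ↔ ρ z = z := by
  constructor
  · intro h
    exact (hρ.eq_of hz h (sc_step ρ (SameCycle.refl _ _))).symm
  · intro h
    rw [h]; exact hz

lemma mem_iff {u m : ℕ} {ρ : Equiv.Perm (Fin (r + n))} (hρ : Sep ρ)
    (τ : Equiv.Perm (Fin r)) :
    (EE r n τ * ρ ∈ Dgen r u m n) ↔ ρ ∈ Drum r u m n := by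
  have h1 : (Finset.univ : Finset (Fin (r + n))).filter
        (fun x : Fin (r + n) => (x : ℕ) < r ∧ (((EE r n τ * ρ) x : Fin (r + n)) : ℕ) < r)
      = Finset.univ.filter (fun z : Fin (r + n) => (z : ℕ) < r ∧ ρ z = z) := by
    apply filter_congr
    intro z _
    apply and_congr_right
    intro hz
    have hb : (EE r n τ * ρ) z = EE r n τ (ρ z) := rfl
    rw [hb, EE_lt_iff, rho_fix_iff hρ hz]
  have h2 : (Finset.univ : Finset (Fin (r + n))).filter
        (fun t : Fin (r + n) => r ≤ (t : ℕ) ∧ (EE r n τ * ρ) t = t)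
      = Finset.univ.filter (fun t : Fin (r + n) => r ≤ (t : ℕ) ∧ ρ t = t) := by
    apply filter_congr
    intro t _
    apply and_congr_right
    intro ht
    have hb : (EE r n τ * ρ) t = EE r n τ (ρ t) := rfl
    by_cases hR : ((ρ t : Fin (r + n)) : ℕ) < r
    · apply iff_of_false
      · intro he
        have hlt := (EE_lt_iff τ (ρ t)).mpr hR
        rw [← hb, he] at hlt
        omega
      · intro he
        rw [he] at hR
        omega
    · rw [hb, EE_notR τ hR]
  simp only [Dgen, Drum, mem_filter, mem_univ, true_and]
  rw [h1, h2]
  exact ⟨fun h => ⟨hρ, h⟩, fun h => h.2⟩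

lemma filter_lt_eq_image :
    (Finset.univ : Finset (Fin (r + n))).filter (fun x : Fin (r + n) => (x : ℕ) < r)
      = Finset.univ.image (ι r n) := by
  ext z
  simp only [mem_filter, mem_univ, true_and, mem_image]
  constructor
  · intro h
    exact ⟨⟨(z : ℕ), h⟩, (eq_ι h).symm⟩
  · rintro ⟨x, rfl⟩
    exact ι_lt x

lemma tc_eq {ρ : Equiv.Perm (Fin (r + n))} (hρ : Sep ρ) (τ : Equiv.Perm (Fin r)) :
    touchingCycles r n (EE r n τ * ρ) = cyc τ := by
  unfold touchingCycles cyc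
  rw [filter_lt_eq_image, image_image]
  exact card_image_congr _ _ (fun x y =>
    (classEq_iff (EE r n τ * ρ) (ι r n x) (ι r n y)).trans
      ((sc_mul_iff_R hρ τ x y).trans (classEq_iff τ x y).symm))

lemma exists_decomp (σ : Equiv.Perm (Fin (r + n))) :
    ∃ τ : Equiv.Perm (Fin r), Sep ((EE r n τ)⁻¹ * σ) := by
  classical
  have hex : ∀ x : Fin r, ∃ i : ℕ, 0 < i ∧ (((σ ^ i) (ι r n x) : Fin (r + n)) : ℕ) < r :=
    fun x => ⟨orderOf σ, orderOf_pos σ, by rw [pow_orderOf_eq_one]; exact ι_lt x⟩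
  set mf : Fin r → ℕ := fun x => Nat.find (hex x) with hmf
  have hspec : ∀ x, 0 < mf x ∧ (((σ ^ mf x) (ι r n x) : Fin (r + n)) : ℕ) < r :=
    fun x => Nat.find_spec (hex x)
  have hmin : ∀ x, ∀ j, j < mf x →
      ¬(0 < j ∧ (((σ ^ j) (ι r n x) : Fin (r + n)) : ℕ) < r) :=
    fun x j hj => Nat.find_min (hex x) hj
  set τ0 : Fin r → Fin r :=
    fun x => ⟨(((σ ^ mf x) (ι r n x) : Fin (r + n)) : ℕ), (hspec x).2⟩ with hτ0
  have hι0 : ∀ x, ι r n (τ0 x) = (σ ^ mf x) (ι r n x) := fun x => Fin.ext rfl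
  have key : ∀ x y : Fin r, mf y ≤ mf x → τ0 x = τ0 y → x = y := by
    intro x y hle he
    have he' : (σ ^ mf x) (ι r n x) = (σ ^ mf y) (ι r n y) := by
      rw [← hι0, ← hι0, he]
    have hsub : (σ ^ (mf x - mf y)) (ι r n x) = ι r n y := by
      apply (σ ^ mf y).injective
      rw [← Equiv.Perm.mul_apply, ← pow_add, Nat.add_sub_cancel' hle, he']
    rcases Nat.eq_zero_or_pos (mf x - mf y) with h0 | hpos
    · rw [h0, pow_zero] at hsub
      exact ι_inj (by simpa using hsub)
    · exfalso
      have hlt : mf x - mf y < mf x := Nat.sub_lt (Nat.lt_of_lt_of_le (hspec y).1 hle) (hspec y).1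
      exact hmin x _ hlt ⟨hpos, by rw [hsub]; exact ι_lt y⟩
  have hinj : Function.Injective τ0 := by
    intro x y he
    rcases le_total (mf y) (mf x) with h | h
    · exact key x y h he
    · exact (key y x h he.symm).symm
  set τ : Equiv.Perm (Fin r) := Equiv.ofBijective τ0 (Finite.injective_iff_bijective.mp hinj)
    with hτ
  have hτap : ∀ x, τ x = τ0 x := fun x => rfl
  refine ⟨τ, ?_⟩
  set ρ := (EE r n τ)⁻¹ * σ with hρdef
  have hρap : ∀ z : Fin (r + n), ρ z = (EE r n τ)⁻¹ (σ z) := fun z => rfl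
  have hinv_notR : ∀ z : Fin (r + n), ¬(z : ℕ) < r → (EE r n τ)⁻¹ z = z := by
    intro z hz
    rw [EE_inv]
    exact EE_notR _ hz
  have hinv_ι : ∀ w : Fin r, (EE r n τ)⁻¹ (ι r n w) = ι r n (τ⁻¹ w) := by
    intro w
    rw [EE_inv]
    exact EE_ι _ _
  have claim1 : ∀ (x : Fin r) (i : ℕ), i < mf x →
      (ρ ^ i) (ι r n x) = (σ ^ i) (ι r n x) := by
    intro x i
    induction i with
    | zero => intro _; rfl
    | succ i ih =>
      intro h
      have hi : i < mf x := Nat.lt_of_succ_lt h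
      rw [pow_succ', Equiv.Perm.mul_apply, ih hi, hρap,
        ← Equiv.Perm.mul_apply σ, ← pow_succ']
      exact hinv_notR _ (fun hcon => hmin x (i + 1) h ⟨Nat.succ_pos i, hcon⟩)
  have claim2 : ∀ x : Fin r, (ρ ^ mf x) (ι r n x) = ι r n x := by
    intro x
    have h1 : mf x - 1 < mf x := Nat.sub_lt (hspec x).1 Nat.one_pos
    have hstep : (ρ ^ mf x) (ι r n x) = ρ ((ρ ^ (mf x - 1)) (ι r n x)) := by
      rw [← Equiv.Perm.mul_apply, ← pow_succ', Nat.sub_add_cancel (hspec x).1]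
    rw [hstep, claim1 x _ h1, hρap, ← Equiv.Perm.mul_apply σ, ← pow_succ',
      Nat.sub_add_cancel (hspec x).1, ← hι0 x, hinv_ι, ← hτap, ← Equiv.Perm.mul_apply, inv_mul_cancel, Equiv.Perm.one_apply]
  have claim2' : ∀ (x : Fin r) (q : ℕ), (ρ ^ (q * mf x)) (ι r n x) = ι r n x := by
    intro x q
    induction q with
    | zero => rw [Nat.zero_mul, pow_zero]; rfl
    | succ q ih =>
      rw [Nat.succ_mul, pow_add, Equiv.Perm.mul_apply, claim2 x, ih]
  have claim3 : ∀ (x : Fin r) (i : ℕ),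
      (ρ ^ i) (ι r n x) = (σ ^ (i % mf x)) (ι r n x) := by
    intro x i
    conv_lhs => rw [← Nat.mod_add_div' i (mf x)]
    rw [pow_add, Equiv.Perm.mul_apply, claim2' x (i / mf x),
      claim1 x _ (Nat.mod_lt i (hspec x).1)]
  intro z w hz hw hne hsc
  obtain ⟨i, -, hi⟩ := hsc.exists_pow_eq'
  rw [eq_ι hz, eq_ι hw] at hi
  rw [claim3] at hi
  rcases Nat.eq_zero_or_pos (i % mf ⟨(z : ℕ), hz⟩) with h0 | hpos
  · rw [h0, pow_zero] at hi
    apply hne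
    rw [eq_ι hz, eq_ι hw]
    simpa using hi
  · exact hmin _ _ (Nat.mod_lt i (hspec _).1) ⟨hpos, by rw [hi]; exact ι_lt _⟩

end PartB
end DP

theorem Dgen_cycles_card_eq (r u m n k : ℕ) :
    ((Dgen r u m n).filter (fun σ => touchingCycles r n σ = k)).card =
      stirling1 r k * (Drum r u m n).card := by
  classical
  have hbij :
      ((Dgen r u m n).filter (fun σ => touchingCycles r n σ = k)).card =
      (((Finset.univ : Finset (Equiv.Perm (Fin r))).filter (fun τ => DP.cyc τ = k))
        ×ˢ Drum r u m n).card := by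
    apply (Finset.card_bij (fun p _ => DP.EE r n p.1 * p.2) ?_ ?_ ?_).symm
    · rintro ⟨τ, ρ⟩ hmem
      rw [Finset.mem_product] at hmem
      obtain ⟨hτ, hρ⟩ := hmem
      have hsep : DP.Sep ρ := (Finset.mem_filter.mp hρ).2.1
      rw [Finset.mem_filter]
      refine ⟨(DP.mem_iff hsep τ).mpr hρ, ?_⟩
      rw [DP.tc_eq hsep τ]
      exact (Finset.mem_filter.mp hτ).2
    · rintro ⟨τ₁, ρ₁⟩ h1 ⟨τ₂, ρ₂⟩ h2 heq
      rw [Finset.mem_product] at h1 h2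
      have hs1 : DP.Sep ρ₁ := (Finset.mem_filter.mp h1.2).2.1
      have hs2 : DP.Sep ρ₂ := (Finset.mem_filter.mp h2.2).2.1
      have heq' : DP.EE r n τ₁ * ρ₁ = DP.EE r n τ₂ * ρ₂ := heq
      have hδ : DP.EE r n (τ₂⁻¹ * τ₁) * ρ₁ = ρ₂ := by
        rw [DP.EE_mul, ← DP.EE_inv, mul_assoc, heq', inv_mul_cancel_left]
      have hone : τ₂⁻¹ * τ₁ = 1 := DP.delta_eq_one hs1 (by rw [hδ]; exact hs2)
      have hττ : τ₂ = τ₁ := by rwa [inv_mul_eq_one] at hone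
      subst hττ
      have hρρ : ρ₁ = ρ₂ := mul_left_cancel heq'
      rw [hρρ]
    · intro σ hσ
      rw [Finset.mem_filter] at hσ
      obtain ⟨τ, hsep⟩ := DP.exists_decomp σ
      have hστ : DP.EE r n τ * ((DP.EE r n τ)⁻¹ * σ) = σ := mul_inv_cancel_left _ _
      refine ⟨(τ, (DP.EE r n τ)⁻¹ * σ), ?_, hστ⟩
      rw [Finset.mem_product]
      constructor
      · rw [Finset.mem_filter]
        refine ⟨Finset.mem_univ _, ?_⟩
        have := DP.tc_eq hsep τ
        rw [hστ] at this
        rw [← this]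
        exact hσ.2
      · exact (DP.mem_iff hsep τ).mp (by rw [hστ]; exact hσ.1)
  rw [hbij, Finset.card_product, DP.cyc_count]
end

section
/- For all natural numbers r ≥ 2, u, m, n and i ∈ {0,1}: D^{(i)}(r,u,m,n) = (r!/2) · D_{r,u,m}(n), where D^{(i)}(r,u,m,n) counts permutations in D(r,u,m,n) of parity i (i = 0 for even, i = 1 for odd). -/
open scoped Classical

namespace DgenAux

open Equiv Equiv.Perm Finset

variable {r n : ℕ}

/-- Permutations fixing all "large" elements (those with value `≥ r`). -/
noncomputable def Psmall (r n : ℕ) : Finset (Equiv.Perm (Fin (r + n))) :=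
  Finset.univ.filter (fun π => ∀ t : Fin (r + n), r ≤ (t : ℕ) → π t = t)

lemma mem_Psmall {π : Equiv.Perm (Fin (r + n))} :
    π ∈ Psmall r n ↔ ∀ t : Fin (r + n), r ≤ (t : ℕ) → π t = t := by
  simp [Psmall]

lemma Psmall_inv {π : Equiv.Perm (Fin (r + n))} (hπ : π ∈ Psmall r n) :
    π⁻¹ ∈ Psmall r n := by
  rw [mem_Psmall] at hπ ⊢
  intro t ht
  conv_lhs => rw [← hπ t ht]
  simp

lemma Psmall_small {π : Equiv.Perm (Fin (r + n))} (hπ : π ∈ Psmall r n)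
    {x : Fin (r + n)} (hx : (x : ℕ) < r) : ((π x : Fin (r + n)) : ℕ) < r := by
  by_contra h
  push_neg at h
  have h1 : π (π x) = π x := (mem_Psmall.1 hπ) (π x) h
  have h2 : π x = x := π.injective h1
  rw [h2] at h
  omega

lemma card_Psmall : (Psmall r n).card = Nat.factorial r := by
  have e1 : {x : Fin (r + n) // (x : ℕ) < r} ≃ Fin r :=
    { toFun := fun x => ⟨x.1, x.2⟩
      invFun := fun y => ⟨⟨y.1, lt_of_lt_of_le y.2 (Nat.le_add_right r n)⟩, y.2⟩
      left_inv := fun x => by ext; rfl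
      right_inv := fun y => rfl }
  have e2 : Equiv.Perm {x : Fin (r + n) // (x : ℕ) < r} ≃
      {f : Equiv.Perm (Fin (r + n)) // ∀ a : Fin (r + n), ¬((a : ℕ) < r) → f a = a} :=
    Equiv.Perm.subtypeEquivSubtypePerm _
  have h1 : Psmall r n =
      Finset.univ.filter (fun f : Equiv.Perm (Fin (r + n)) =>
        ∀ a : Fin (r + n), ¬((a : ℕ) < r) → f a = a) := by
    apply Finset.filter_congr
    intro f _
    simp [not_lt]
  rw [h1, ← Fintype.card_subtype]
  rw [← Fintype.card_congr e2, Fintype.card_perm, Fintype.card_congr e1, Fintype.card_fin]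

lemma exists_ret (σ : Equiv.Perm (Fin (r + n))) {x : Fin (r + n)} (hx : (x : ℕ) < r) :
    ∃ k : ℕ, (((σ ^ (k + 1)) x : Fin (r + n)) : ℕ) < r := by
  refine ⟨orderOf σ - 1, ?_⟩
  have h1 : 0 < orderOf σ := orderOf_pos σ
  have h2 : orderOf σ - 1 + 1 = orderOf σ := by omega
  rw [h2, pow_orderOf_eq_one]
  simpa using hx

/-- The first return of the σ-orbit of `x` to the small elements. -/
noncomputable def fret (σ : Equiv.Perm (Fin (r + n))) (x : Fin (r + n)) : Fin (r + n) :=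
  if h : ∃ k : ℕ, (((σ ^ (k + 1)) x : Fin (r + n)) : ℕ) < r then (σ ^ (Nat.find h + 1)) x else x

lemma fret_spec (σ : Equiv.Perm (Fin (r + n))) {x : Fin (r + n)} (hx : (x : ℕ) < r) :
    ∃ a : ℕ, 0 < a ∧ (σ ^ a) x = fret σ x ∧ ((fret σ x : Fin (r + n)) : ℕ) < r ∧
      ∀ j, 0 < j → j < a → r ≤ (((σ ^ j) x : Fin (r + n)) : ℕ) := by
  have h := exists_ret σ hx
  refine ⟨Nat.find h + 1, Nat.succ_pos _, ?_, ?_, ?_⟩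
  · rw [fret, dif_pos h]
  · rw [fret, dif_pos h]
    exact Nat.find_spec h
  · intro j hj hja
    have hm : ¬ (((σ ^ (j - 1 + 1)) x : Fin (r + n)) : ℕ) < r := Nat.find_min h (by omega)
    have hj1 : j - 1 + 1 = j := by omega
    rw [hj1] at hm
    omega

lemma fret_eq (σ : Equiv.Perm (Fin (r + n))) {x : Fin (r + n)} (hx : (x : ℕ) < r) {a : ℕ}
    (ha : 0 < a) (h1 : (((σ ^ a) x : Fin (r + n)) : ℕ) < r)
    (h2 : ∀ j, 0 < j → j < a → r ≤ (((σ ^ j) x : Fin (r + n)) : ℕ)) :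
    fret σ x = (σ ^ a) x := by
  obtain ⟨b, hb, hbe, hbs, hbm⟩ := fret_spec σ hx
  rcases lt_trichotomy a b with h | h | h
  · exact absurd h1 (by have := hbm a ha h; omega)
  · rw [← hbe, h]
  · exact absurd hbs (by rw [← hbe]; have := h2 b hb h; omega)

lemma fret_inj (σ : Equiv.Perm (Fin (r + n))) {x y : Fin (r + n)} (hx : (x : ℕ) < r)
    (hy : (y : ℕ) < r) (hxy : fret σ x = fret σ y) : x = y := by
  have key : ∀ (a b : ℕ) (x y : Fin (r + n)), 0 < a → a ≤ b → (x : ℕ) < r →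
      (σ ^ a) x = (σ ^ b) y →
      (∀ j, 0 < j → j < b → r ≤ (((σ ^ j) y : Fin (r + n)) : ℕ)) → x = y := by
    intro a b x y ha hab hx he hm
    have hb' : a + (b - a) = b := by omega
    have h1 : (σ ^ a) x = (σ ^ a) ((σ ^ (b - a)) y) := by
      rw [← Equiv.Perm.mul_apply, ← pow_add, hb', he]
    have h2 : x = (σ ^ (b - a)) y := (σ ^ a).injective h1
    by_cases hba : b - a = 0
    · rw [hba] at h2
      simpa using h2
    · have hlt : b - a < b := by omega
      have := hm (b - a) (by omega) hlt
      rw [← h2] at this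
      omega
  obtain ⟨a, ha, hae, _, ham⟩ := fret_spec σ hx
  obtain ⟨b, hb, hbe, _, hbm⟩ := fret_spec σ hy
  have he : (σ ^ a) x = (σ ^ b) y := by rw [hae, hbe, hxy]
  rcases le_total a b with h | h
  · exact key a b x y ha h hx he hbm
  · exact (key b a y x hb h hy he.symm ham).symm

lemma sameCycle_small_eq (σ : Equiv.Perm (Fin (r + n))) {x : Fin (r + n)} (hx : (x : ℕ) < r)
    (hfix : fret σ x = x) :
    ∀ y : Fin (r + n), (y : ℕ) < r → σ.SameCycle x y → y = x := by
  intro y hy hcyc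
  obtain ⟨a, ha, hae, _, ham⟩ := fret_spec σ hx
  rw [hfix] at hae
  obtain ⟨i, hi⟩ := hcyc
  set s : ℤ := i % (a : ℤ) with hs
  have hane : ((a : ℤ)) ≠ 0 := by exact_mod_cast ha.ne'
  have hs0 : 0 ≤ s := Int.emod_nonneg i hane
  have hslt : s < (a : ℤ) := Int.emod_lt_of_pos i (by exact_mod_cast ha)
  have hdecomp : (a : ℤ) * (i / (a : ℤ)) + s = i := Int.mul_ediv_add_emod i (a : ℤ)
  have hfixz : ((σ ^ ((a : ℤ) * (i / (a : ℤ)))) : Equiv.Perm (Fin (r + n))) x = x := by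
    rw [zpow_mul]
    have hza : ((σ ^ (a : ℤ)) : Equiv.Perm (Fin (r + n))) x = x := by
      rw [zpow_natCast]; exact hae
    exact Equiv.Perm.zpow_apply_eq_self_of_apply_eq_self hza _
  have hy' : (σ ^ s) ((σ ^ ((a : ℤ) * (i / (a : ℤ)))) x) = y := by
    rw [← Equiv.Perm.mul_apply, ← zpow_add]
    have h3 : s + (a : ℤ) * (i / (a : ℤ)) = i := by omega
    rw [h3]; exact hi
  rw [hfixz] at hy'
  have hsn : (σ ^ s.toNat) x = y := by
    rw [← hy', ← zpow_natCast, Int.toNat_of_nonneg hs0]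
  by_cases h0 : s.toNat = 0
  · rw [h0] at hsn
    simpa using hsn.symm
  · have hlt : s.toNat < a := by omega
    have := ham s.toNat (by omega) hlt
    rw [hsn] at this
    omega

lemma fret_eq_self_of_disjoint (σ : Equiv.Perm (Fin (r + n)))
    (hdisj : ∀ x y : Fin (r + n), (x : ℕ) < r → (y : ℕ) < r → x ≠ y → ¬ σ.SameCycle x y)
    {x : Fin (r + n)} (hx : (x : ℕ) < r) : fret σ x = x := by
  obtain ⟨a, ha, hae, hsmall, _⟩ := fret_spec σ hx
  by_contra hne
  exact hdisj x (fret σ x) hx hsmall (fun h => hne h.symm)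
    ⟨(a : ℤ), by rw [zpow_natCast]; exact hae⟩

lemma disjoint_of_fret_id (σ : Equiv.Perm (Fin (r + n)))
    (hfix : ∀ x : Fin (r + n), (x : ℕ) < r → fret σ x = x) :
    ∀ x y : Fin (r + n), (x : ℕ) < r → (y : ℕ) < r → x ≠ y → ¬ σ.SameCycle x y := by
  intro x y hx hy hne hcyc
  exact hne (sameCycle_small_eq σ hx (hfix x hx) y hy hcyc).symm

lemma fret_mul (σ π : Equiv.Perm (Fin (r + n))) (hπ : π ∈ Psmall r n)
    {x : Fin (r + n)} (hx : (x : ℕ) < r) :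
    fret (σ * π) x = fret σ (π x) := by
  have hπx : ((π x : Fin (r + n)) : ℕ) < r := Psmall_small hπ hx
  obtain ⟨a, ha, hae, hsmall, ham⟩ := fret_spec σ hπx
  have key : ∀ j, 0 < j → j ≤ a → ((σ * π) ^ j) x = (σ ^ j) (π x) := by
    intro j
    induction j with
    | zero => omega
    | succ j ih =>
      intro _ hja
      by_cases hj0 : j = 0
      · subst hj0
        simp [Equiv.Perm.mul_apply]
      · have hj : 0 < j := Nat.pos_of_ne_zero hj0
        have hlt : j < a := by omega
        have ihe := ih hj (by omega)
        have hlarge : r ≤ (((σ ^ j) (π x) : Fin (r + n)) : ℕ) := ham j hj hlt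
        rw [pow_succ', Equiv.Perm.mul_apply, ihe, Equiv.Perm.mul_apply,
          mem_Psmall.1 hπ _ hlarge, pow_succ', Equiv.Perm.mul_apply]
  have h1 : ((((σ * π) ^ a) x : Fin (r + n)) : ℕ) < r := by
    rw [key a ha le_rfl, hae]; exact hsmall
  have h2 : ∀ j, 0 < j → j < a → r ≤ ((((σ * π) ^ j) x : Fin (r + n)) : ℕ) := by
    intro j hj hja
    rw [key j hj (le_of_lt hja)]
    exact ham j hj hja
  rw [fret_eq (σ * π) hx ha h1 h2, key a ha le_rfl, hae]

lemma pair_filter_mul (σ π : Equiv.Perm (Fin (r + n))) (hπ : π ∈ Psmall r n) :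
    (Finset.univ.filter (fun x : Fin (r + n) =>
      (x : ℕ) < r ∧ (((σ * π) x : Fin (r + n)) : ℕ) < r)).card =
    (Finset.univ.filter (fun x : Fin (r + n) =>
      (x : ℕ) < r ∧ ((σ x : Fin (r + n)) : ℕ) < r)).card := by
  apply Finset.card_bij (fun x _ => π x)
  · intro x hx
    simp only [Finset.mem_filter, Finset.mem_univ, true_and] at hx ⊢
    refine ⟨Psmall_small hπ hx.1, ?_⟩
    rw [← Equiv.Perm.mul_apply]
    exact hx.2
  · intro x _ y _ h
    exact π.injective h
  · intro z hz
    simp only [Finset.mem_filter, Finset.mem_univ, true_and] at hz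
    refine ⟨π⁻¹ z, ?_, by simp⟩
    simp only [Finset.mem_filter, Finset.mem_univ, true_and]
    refine ⟨Psmall_small (Psmall_inv hπ) hz.1, ?_⟩
    rw [Equiv.Perm.mul_apply]
    simpa using hz.2

lemma fix_filter_mul (σ π : Equiv.Perm (Fin (r + n))) (hπ : π ∈ Psmall r n) :
    Finset.univ.filter (fun t : Fin (r + n) => r ≤ (t : ℕ) ∧ (σ * π) t = t) =
    Finset.univ.filter (fun t : Fin (r + n) => r ≤ (t : ℕ) ∧ σ t = t) := by
  apply Finset.filter_congr
  intro t _
  apply and_congr_right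
  intro ht
  rw [Equiv.Perm.mul_apply, mem_Psmall.1 hπ t ht]



lemma drum_filter_eq (σ : Equiv.Perm (Fin (r + n)))
    (hdisj : ∀ x y : Fin (r + n), (x : ℕ) < r → (y : ℕ) < r → x ≠ y → ¬ σ.SameCycle x y) :
    Finset.univ.filter (fun x : Fin (r + n) => (x : ℕ) < r ∧ ((σ x : Fin (r + n)) : ℕ) < r) =
    Finset.univ.filter (fun x : Fin (r + n) => (x : ℕ) < r ∧ σ x = x) := by
  apply Finset.filter_congr
  intro x _
  apply and_congr_right
  intro hx
  constructor
  · intro hσx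
    by_contra hne
    exact hdisj x (σ x) hx hσx (fun h => hne h.symm) ⟨1, by simp⟩
  · intro h
    rw [h]
    exact hx

lemma Dgen_mul_mem {u m : ℕ} (σ π : Equiv.Perm (Fin (r + n))) (hπ : π ∈ Psmall r n)
    (hσ : σ ∈ Dgen r u m n) : σ * π ∈ Dgen r u m n := by
  simp only [Dgen, Finset.mem_filter, Finset.mem_univ, true_and] at hσ ⊢
  refine ⟨?_, ?_⟩
  · rw [pair_filter_mul σ π hπ]
    exact hσ.1
  · rw [fix_filter_mul σ π hπ]
    exact hσ.2

lemma card_Dgen (u m : ℕ) :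
    (Dgen r u m n).card = Nat.factorial r * (Drum r u m n).card := by
  have hprod : (Drum r u m n ×ˢ Psmall r n).card = (Dgen r u m n).card := by
    apply Finset.card_bij (fun p _ => p.1 * p.2)
    · rintro ⟨τ, π⟩ hp
      rw [Finset.mem_product] at hp
      obtain ⟨hτ, hπ⟩ := hp
      have hτ' := (Finset.mem_filter.1 hτ).2
      have hτg : τ ∈ Dgen r u m n := by
        simp only [Dgen, Finset.mem_filter, Finset.mem_univ, true_and]
        refine ⟨?_, hτ'.2.2⟩
        rw [drum_filter_eq τ hτ'.1]
        exact hτ'.2.1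
      exact Dgen_mul_mem τ π hπ hτg
    · rintro ⟨τ₁, π₁⟩ hp1 ⟨τ₂, π₂⟩ hp2 heq
      rw [Finset.mem_product] at hp1 hp2
      have hd1 := (Finset.mem_filter.1 hp1.1).2.1
      have hd2 := (Finset.mem_filter.1 hp2.1).2.1
      simp only at heq
      have hπeq : π₁ = π₂ := by
        apply Equiv.ext
        intro z
        by_cases hz : (z : ℕ) < r
        · have h1 : fret (τ₁ * π₁) z = π₁ z := by
            rw [fret_mul τ₁ π₁ hp1.2 hz]
            exact fret_eq_self_of_disjoint τ₁ hd1 (Psmall_small hp1.2 hz)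
          have h2 : fret (τ₂ * π₂) z = π₂ z := by
            rw [fret_mul τ₂ π₂ hp2.2 hz]
            exact fret_eq_self_of_disjoint τ₂ hd2 (Psmall_small hp2.2 hz)
          rw [← h1, ← h2, heq]
        · rw [mem_Psmall.1 hp1.2 z (not_lt.1 hz), mem_Psmall.1 hp2.2 z (not_lt.1 hz)]
      have hτeq : τ₁ = τ₂ := by
        rw [hπeq] at heq
        exact mul_right_cancel heq
      rw [Prod.mk.injEq]
      exact ⟨hτeq, hπeq⟩
    · intro σ hσ
      simp only [Dgen, Finset.mem_filter, Finset.mem_univ, true_and] at hσ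
      -- build π
      set g : Fin (r + n) → Fin (r + n) := fun z => if (z : ℕ) < r then fret σ z else z with hg
      have hginj : Function.Injective g := by
        intro z w h
        simp only [hg] at h
        by_cases hz : (z : ℕ) < r <;> by_cases hw : (w : ℕ) < r
        · rw [if_pos hz, if_pos hw] at h
          exact fret_inj σ hz hw h
        · rw [if_pos hz, if_neg hw] at h
          obtain ⟨a, ha, hae, hs, ham⟩ := fret_spec σ hz
          rw [← h] at hw
          exact absurd hs hw
        · rw [if_neg hz, if_pos hw] at h
          obtain ⟨a, ha, hae, hs, ham⟩ := fret_spec σ hw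
          rw [h] at hz
          exact absurd hs hz
        · rw [if_neg hz, if_neg hw] at h
          exact h
      set π : Equiv.Perm (Fin (r + n)) :=
        Equiv.ofBijective g (Finite.injective_iff_bijective.1 hginj) with hπdef
      have hπapp : ∀ z, π z = g z := fun z => rfl
      have hπP : π ∈ Psmall r n := by
        rw [mem_Psmall]
        intro t ht
        rw [hπapp, hg]
        simp only
        rw [if_neg (by omega)]
      have hπsmall : ∀ z : Fin (r + n), (z : ℕ) < r → π z = fret σ z := by
        intro z hz
        rw [hπapp, hg]
        simp only
        rw [if_pos hz]
      set τ : Equiv.Perm (Fin (r + n)) := σ * π⁻¹ with hτdef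
      have hτπ : τ * π = σ := inv_mul_cancel_right σ π
      have hfixτ : ∀ y : Fin (r + n), (y : ℕ) < r → fret τ y = y := by
        intro y hy
        have hx : ((π⁻¹ y : Fin (r + n)) : ℕ) < r := Psmall_small (Psmall_inv hπP) hy
        have h1 : fret (τ * π) (π⁻¹ y) = fret τ (π (π⁻¹ y)) := fret_mul τ π hπP hx
        rw [hτπ] at h1
        have h2 : fret σ (π⁻¹ y) = π (π⁻¹ y) := (hπsmall _ hx).symm
        rw [h2] at h1
        simpa using h1.symm
      have hdisjτ : ∀ x y : Fin (r + n), (x : ℕ) < r → (y : ℕ) < r → x ≠ y →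
          ¬ τ.SameCycle x y := disjoint_of_fret_id τ hfixτ
      have hτmem : τ ∈ Drum r u m n := by
        simp only [Drum, Finset.mem_filter, Finset.mem_univ, true_and]
        refine ⟨hdisjτ, ?_, ?_⟩
        · rw [← drum_filter_eq τ hdisjτ]
          have := pair_filter_mul τ π hπP
          rw [hτπ] at this
          rw [← this]
          exact hσ.1
        · have := fix_filter_mul τ π hπP
          rw [hτπ] at this
          rw [← this]
          exact hσ.2
      refine ⟨⟨τ, π⟩, ?_, hτπ⟩
      rw [Finset.mem_product]
      exact ⟨hτmem, hπP⟩
  rw [← hprod, Finset.card_product, card_Psmall, mul_comm]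

lemma parity_eq_zero_iff {α : Type*} [Fintype α] [DecidableEq α] (σ : Equiv.Perm α) :
    parity σ = 0 ↔ Equiv.Perm.sign σ = 1 := by
  unfold parity
  split <;> simp_all

lemma parity_eq_one_iff {α : Type*} [Fintype α] [DecidableEq α] (σ : Equiv.Perm α) :
    parity σ = 1 ↔ Equiv.Perm.sign σ = -1 := by
  unfold parity
  rcases Int.units_eq_one_or (Equiv.Perm.sign σ) with h | h <;> simp [h]

lemma card_parity (u m i : ℕ) (hr : 2 ≤ r) (hi : i ≤ 1) :
    2 * ((Dgen r u m n).filter (fun σ => parity σ = i)).card = (Dgen r u m n).card := by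
  have h0 : (0 : ℕ) < r + n := by omega
  have h1 : (1 : ℕ) < r + n := by omega
  set c : Equiv.Perm (Fin (r + n)) := Equiv.swap ⟨0, h0⟩ ⟨1, h1⟩ with hcdef
  have hne : (⟨0, h0⟩ : Fin (r + n)) ≠ ⟨1, h1⟩ := by simp [Fin.ext_iff]
  have hsign : Equiv.Perm.sign c = -1 := Equiv.Perm.sign_swap hne
  have hcP : c ∈ Psmall r n := by
    rw [mem_Psmall]
    intro t ht
    apply Equiv.swap_apply_of_ne_of_ne
    · intro h
      rw [h] at ht
      simp at ht
      omega
    · intro h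
      rw [h] at ht
      simp at ht
      omega
  have hcc : c * c = 1 := Equiv.swap_mul_self _ _
  have hsigncase : ∀ σ : Equiv.Perm (Fin (r + n)),
      Equiv.Perm.sign σ = 1 ∨ Equiv.Perm.sign σ = -1 := fun σ => Int.units_eq_one_or _
  have hflip : ∀ σ : Equiv.Perm (Fin (r + n)), ∀ j : ℕ, j ≤ 1 →
      (parity σ = j ↔ parity (σ * c) = 1 - j) := by
    intro σ j hj
    have hs : Equiv.Perm.sign (σ * c) = Equiv.Perm.sign σ * (-1) := by
      rw [map_mul, hsign]
    interval_cases j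
    · simp only [Nat.sub_zero]
      rw [parity_eq_zero_iff, parity_eq_one_iff, hs]
      rcases hsigncase σ with h | h <;> rw [h] <;> decide
    · simp only [Nat.sub_self]
      rw [parity_eq_one_iff, parity_eq_zero_iff, hs]
      rcases hsigncase σ with h | h <;> rw [h] <;> decide
  have hbij : ((Dgen r u m n).filter (fun σ => parity σ = i)).card =
      ((Dgen r u m n).filter (fun σ => parity σ = 1 - i)).card := by
    apply Finset.card_bij (fun σ _ => σ * c)
    · intro σ hσ
      rw [Finset.mem_filter] at hσ ⊢
      exact ⟨Dgen_mul_mem σ c hcP hσ.1, (hflip σ i hi).1 hσ.2⟩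
    · intro σ _ σ' _ h
      exact mul_right_cancel h
    · intro σ' hσ'
      rw [Finset.mem_filter] at hσ'
      refine ⟨σ' * c, ?_, by rw [mul_assoc, hcc, mul_one]⟩
      rw [Finset.mem_filter]
      refine ⟨Dgen_mul_mem σ' c hcP hσ'.1, ?_⟩
      have := (hflip (σ' * c) i hi).2
      rw [mul_assoc, hcc, mul_one] at this
      exact this hσ'.2
  have hparts : ((Dgen r u m n).filter (fun σ => parity σ = i)).card +
      ((Dgen r u m n).filter (fun σ => parity σ = 1 - i)).card = (Dgen r u m n).card := by
    have hpq : (Dgen r u m n).filter (fun σ => parity σ = 1 - i) =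
        (Dgen r u m n).filter (fun σ => ¬ parity σ = i) := by
      apply Finset.filter_congr
      intro σ _
      have hp : parity σ = 0 ∨ parity σ = 1 := by
        unfold parity
        split
        · left; rfl
        · right; rfl
      rcases hp with hp | hp <;> constructor <;> intro h <;> omega
    rw [hpq]
    exact Finset.card_filter_add_card_filter_not _
  omega
end DgenAux

theorem Dgen_parity_card_eq (r u m n i : ℕ) (hr : 2 ≤ r) (hi : i ≤ 1) :
    2 * ((Dgen r u m n).filter (fun σ => parity σ = i)).card =
      Nat.factorial r * (Drum r u m n).card := by
  rw [DgenAux.card_parity u m i hr hi, DgenAux.card_Dgen u m]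
end

section
/- For all natural numbers r, u, m, n and i ∈ {0,1}: D_{r,u,m}(n) = C(r,u)·C(n,m)·D_{r−u}(n−m) and D_{r,u,m}^{(i)}(n) = C(r,u)·C(n,m)·D_{r−u}^{(i)}(n−m), where C(a,b) denotes a binomial coefficient (with u ≤ r and m ≤ n). -/
open scoped Classical

section AuxDrum
open Finset Equiv Equiv.Perm

private lemma card_filter_lt_fin (r n : ℕ) :
    ((Finset.univ : Finset (Fin (r+n))).filter (fun x : Fin (r+n) => (x:ℕ) < r)).card = r := by
  have himg : ((Finset.univ : Finset (Fin r)).image (Fin.castAdd n)) =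
      (Finset.univ : Finset (Fin (r+n))).filter (fun x : Fin (r+n) => (x:ℕ) < r) := by
    ext x
    simp only [Finset.mem_image, Finset.mem_filter, Finset.mem_univ, true_and]
    constructor
    · rintro ⟨y, -, rfl⟩; exact y.isLt
    · intro hx; exact ⟨⟨(x:ℕ), hx⟩, by ext; simp⟩
  rw [← himg, Finset.card_image_of_injective _ (fun a b h => by
    apply Fin.ext; simpa using congrArg Fin.val h)]
  simp

private lemma card_filter_ge_fin (r n : ℕ) :
    ((Finset.univ : Finset (Fin (r+n))).filter (fun x : Fin (r+n) => r ≤ (x:ℕ))).card = n := by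
  have h := Finset.card_filter_add_card_filter_not
    (s := (Finset.univ : Finset (Fin (r+n)))) (p := fun x => (x:ℕ) < r)
  rw [card_filter_lt_fin] at h
  have he : (Finset.univ.filter fun x : Fin (r+n) => ¬ (x:ℕ) < r)
      = Finset.univ.filter (fun x : Fin (r+n) => r ≤ (x:ℕ)) := by
    apply Finset.filter_congr; intro x _; simp [not_lt]
  rw [he] at h
  simp only [Finset.card_univ, Fintype.card_fin] at h
  omega

private lemma fiber_card_eq (r u m n : ℕ) (hu : u ≤ r) (hm : m ≤ n)
    (S T : Finset (Fin (r+n)))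
    (hS : ∀ x ∈ S, (x:ℕ) < r) (hSc : S.card = u)
    (hT : ∀ x ∈ T, r ≤ (x:ℕ)) (hTc : T.card = m) (P : ℕ → Prop) :
    ((Finset.univ : Finset (Equiv.Perm (Fin (r+n)))).filter (fun σ =>
        ((∀ x y : Fin (r+n), (x:ℕ) < r → (y:ℕ) < r → x ≠ y → ¬ σ.SameCycle x y) ∧
         (∀ x, σ x = x ↔ x ∈ S ∨ x ∈ T)) ∧ P (parity σ))).card
    = ((rDerSet (r-u) (n-m)).filter (fun σ => P (parity σ))).card := by
  classical
  set p : Fin (r+n) → Prop := fun x => ¬(x ∈ S ∨ x ∈ T) with hp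
  -- cardinalities of the two parts of the complement
  have cardA : Fintype.card {x : Fin (r+n) // p x ∧ (x:ℕ) < r} = r - u := by
    rw [Fintype.card_subtype]
    have heq : (Finset.univ.filter fun x : Fin (r+n) => p x ∧ (x:ℕ) < r)
        = (Finset.univ.filter fun x : Fin (r+n) => (x:ℕ) < r) \ S := by
      ext x
      simp only [mem_filter, mem_univ, true_and, mem_sdiff, hp]
      constructor
      · rintro ⟨hnot, hlt⟩; exact ⟨hlt, fun hx => hnot (Or.inl hx)⟩
      · rintro ⟨hlt, hxS⟩
        exact ⟨fun h => h.elim hxS (fun hxT => absurd (hT x hxT) (by omega)), hlt⟩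
    rw [heq, card_sdiff_of_subset (fun x hx => mem_filter.2 ⟨mem_univ _, hS x hx⟩),
      card_filter_lt_fin, hSc]
  have cardB : Fintype.card {x : Fin (r+n) // p x ∧ ¬ (x:ℕ) < r} = n - m := by
    rw [Fintype.card_subtype]
    have heq : (Finset.univ.filter fun x : Fin (r+n) => p x ∧ ¬ (x:ℕ) < r)
        = (Finset.univ.filter fun x : Fin (r+n) => r ≤ (x:ℕ)) \ T := by
      ext x
      simp only [mem_filter, mem_univ, true_and, mem_sdiff, hp, not_lt]
      constructor
      · rintro ⟨hnot, hle⟩; exact ⟨hle, fun hx => hnot (Or.inr hx)⟩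
      · rintro ⟨hle, hxT⟩
        exact ⟨fun h => h.elim (fun hxS => absurd (hS x hxS) (by omega)) hxT, hle⟩
    rw [heq, card_sdiff_of_subset (fun x hx => mem_filter.2 ⟨mem_univ _, hT x hx⟩),
      card_filter_ge_fin, hTc]
  set eA : {x : Fin (r+n) // p x ∧ (x:ℕ) < r} ≃ Fin (r-u) := Fintype.equivFinOfCardEq cardA with heA
  set eB : {x : Fin (r+n) // p x ∧ ¬ (x:ℕ) < r} ≃ Fin (n-m) := Fintype.equivFinOfCardEq cardB with heB
  set f : {x : Fin (r+n) // p x} ≃ Fin ((r-u)+(n-m)) :=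
    ((Equiv.sumCompl (fun x : {x : Fin (r+n) // p x} => ((x : Fin (r+n)) : ℕ) < r)).symm.trans
      (Equiv.sumCongr
        ((Equiv.subtypeSubtypeEquivSubtypeInter p _).trans eA)
        ((Equiv.subtypeSubtypeEquivSubtypeInter p _).trans eB))).trans
      finSumFinEquiv with hfdef
  have hf : ∀ x : {x : Fin (r+n) // p x}, (((f x) : ℕ) < r - u ↔ ((x : Fin (r+n)) : ℕ) < r) := by
    intro x
    by_cases h : ((x : Fin (r+n)) : ℕ) < r
    · rw [hfdef]
      simp only [Equiv.trans_apply, Equiv.sumCompl_symm_apply_of_pos (p := fun y : {x : Fin (r+n) // p x} => ((y : Fin (r+n)) : ℕ) < r) (a := x) h,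
        Equiv.sumCongr_apply, Sum.map_inl, finSumFinEquiv_apply_left]
      simp only [Fin.coe_castAdd]
      exact iff_of_true (Fin.is_lt _) h
    · rw [hfdef]
      simp only [Equiv.trans_apply, Equiv.sumCompl_symm_apply_of_neg (p := fun y : {x : Fin (r+n) // p x} => ((y : Fin (r+n)) : ℕ) < r) (a := x) h,
        Equiv.sumCongr_apply, Sum.map_inr, finSumFinEquiv_apply_right]
      simp only [Fin.coe_natAdd]
      exact iff_of_false (by omega) h
  -- the extension map
  set g : Equiv.Perm (Fin ((r-u)+(n-m))) → Equiv.Perm (Fin (r+n)) :=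
    fun τ => τ.extendDomain f.symm with hgdef
  have hg_apply : ∀ (τ : Equiv.Perm (Fin ((r-u)+(n-m)))) (x : {x : Fin (r+n) // p x}),
      g τ (x : Fin (r+n)) = ((f.symm (τ (f x)) : {x : Fin (r+n) // p x}) : Fin (r+n)) := by
    intro τ x
    have h := Equiv.Perm.extendDomain_apply_subtype τ f.symm x.2
    simpa using h
  have hg_not : ∀ (τ : Equiv.Perm (Fin ((r-u)+(n-m)))) (x : Fin (r+n)), ¬ p x → g τ x = x := by
    intro τ x hx
    exact Equiv.Perm.extendDomain_apply_not_subtype τ f.symm hx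
  have hg_cycle : ∀ (τ : Equiv.Perm (Fin ((r-u)+(n-m)))) (x y : {x : Fin (r+n) // p x}),
      ((g τ).SameCycle (x : Fin (r+n)) (y : Fin (r+n)) ↔ τ.SameCycle (f x) (f y)) := by
    intro τ x y
    have h := Equiv.Perm.sameCycle_extendDomain (g := τ) (f := f.symm)
      (x := f x) (y := f y)
    simpa using h
  have hsign : ∀ τ, parity (g τ) = parity τ := by
    intro τ
    simp [parity, hgdef, Equiv.Perm.sign_extendDomain]
  have hh1 : ∀ (σ : Equiv.Perm (Fin (r+n))), (∀ x, σ x = x ↔ x ∈ S ∨ x ∈ T) →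
      ∀ x, p x ↔ p (σ x) := by
    intro σ hfix x
    have h1 : p x ↔ σ x ≠ x := by rw [hp]; simp only [ne_eq, hfix x]
    have h2 : p (σ x) ↔ σ (σ x) ≠ σ x := by rw [hp]; simp only [ne_eq, hfix (σ x)]
    rw [h1, h2, ne_eq, ne_eq, σ.injective.eq_iff]
  have hgj : ∀ (σ : Equiv.Perm (Fin (r+n))) (h1 : ∀ x, p x ↔ p (σ x))
      (h2 : ∀ x, ¬ p x → σ x = x),
      g (f.permCongr (σ.subtypePerm (fun x => (h1 x).symm))) = σ := by
    intro σ h1 h2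
    ext x
    by_cases hx : p x
    · rw [show x = ((⟨x, hx⟩ : {x : Fin (r+n) // p x}) : Fin (r+n)) from rfl, hg_apply]
      simp [Equiv.permCongr_apply, Equiv.Perm.subtypePerm_apply]
    · rw [hg_not _ _ hx, h2 x hx]
  have hjg : ∀ (τ : Equiv.Perm (Fin ((r-u)+(n-m)))) (h1 : ∀ x, p x ↔ p (g τ x)),
      f.permCongr ((g τ).subtypePerm (fun x => (h1 x).symm)) = τ := by
    intro τ h1
    ext a
    simp only [Equiv.permCongr_apply]
    have hx : g τ ((f.symm a : {x : Fin (r+n) // p x}) : Fin (r+n))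
        = ((f.symm (τ a) : {x : Fin (r+n) // p x}) : Fin (r+n)) := by
      rw [hg_apply τ (f.symm a)]; simp
    have : ((g τ).subtypePerm (fun x => (h1 x).symm)) (f.symm a) = f.symm (τ a) := by
      apply Subtype.ext
      simpa [Equiv.Perm.subtypePerm_apply] using hx
    rw [this]; simp
  have h2of : ∀ (σ : Equiv.Perm (Fin (r+n))), (∀ x, σ x = x ↔ x ∈ S ∨ x ∈ T) →
      ∀ x, ¬ p x → σ x = x := by
    intro σ hfix x hx
    exact (hfix x).2 (not_not.1 hx)
  refine Finset.card_bij'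
    (fun σ hσ => f.permCongr (σ.subtypePerm (fun x => (hh1 σ ((Finset.mem_filter.1 hσ).2.1.2) x).symm)))
    (fun τ _ => g τ) ?_ ?_ ?_ ?_
  · -- hi : image lands in rDerSet filter
    intro σ hσ
    obtain ⟨-, ⟨hcyc, hfix⟩, hP⟩ := Finset.mem_filter.1 hσ
    set h1 := hh1 σ hfix
    set τ := f.permCongr (σ.subtypePerm (fun x => (h1 x).symm)) with hτ
    have hgτ : g τ = σ := hgj σ h1 (h2of σ hfix)
    rw [Finset.mem_filter, rDerSet, Finset.mem_filter]
    refine ⟨⟨Finset.mem_univ _, ?_, ?_⟩, ?_⟩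
    · intro a ha
      have hap := hg_apply τ (f.symm a)
      rw [Equiv.apply_symm_apply, ha, hgτ] at hap
      have : σ ((f.symm a : {x : Fin (r+n) // p x}) : Fin (r+n))
          = ((f.symm a : {x : Fin (r+n) // p x}) : Fin (r+n)) := hap
      exact (f.symm a).2 ((hfix _).1 this)
    · intro a b halt hblt hne hsc
      have hca := hg_cycle τ (f.symm a) (f.symm b)
      rw [Equiv.apply_symm_apply, Equiv.apply_symm_apply, hgτ] at hca
      have hxa : (((f.symm a : {x : Fin (r+n) // p x}) : Fin (r+n)) : ℕ) < r := by
        have := hf (f.symm a); rw [Equiv.apply_symm_apply] at this; exact this.1 halt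
      have hxb : (((f.symm b : {x : Fin (r+n) // p x}) : Fin (r+n)) : ℕ) < r := by
        have := hf (f.symm b); rw [Equiv.apply_symm_apply] at this; exact this.1 hblt
      refine hcyc _ _ hxa hxb ?_ (hca.2 hsc)
      intro hcontr
      exact hne (by
        have : (f.symm a) = (f.symm b) := Subtype.ext hcontr
        simpa using congrArg f this)
    · have : parity τ = parity σ := by rw [← hgτ, hsign]
      rw [this]; exact hP
  · -- hj : g τ lands in the fiber set
    intro τ hτ
    rw [rDerSet, Finset.mem_filter, Finset.mem_filter] at hτ
    obtain ⟨⟨-, hτf, hτc⟩, hτP⟩ := hτ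
    rw [Finset.mem_filter]
    refine ⟨Finset.mem_univ _, ⟨?_, ?_⟩, ?_⟩
    · intro x y hx hy hne hsc
      by_cases px : p x
      · by_cases py : p y
        · have hca := hg_cycle τ ⟨x, px⟩ ⟨y, py⟩
          have h1 := (hf ⟨x, px⟩).2 hx
          have h2 := (hf ⟨y, py⟩).2 hy
          refine hτc _ _ h1 h2 ?_ (hca.1 hsc)
          intro hcontr
          exact hne (by
            have := f.injective hcontr
            exact congrArg Subtype.val this)
        · exact hne (hsc.eq_of_right (hg_not τ y py))
      · exact hne (hsc.eq_of_left (hg_not τ x px))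
    · intro x
      by_cases px : p x
      · refine iff_of_false ?_ (by rw [hp] at px; exact px)
        intro hcontr
        have hap := hg_apply τ ⟨x, px⟩
        rw [show ((⟨x, px⟩ : {x : Fin (r+n) // p x}) : Fin (r+n)) = x from rfl, hcontr] at hap
        have : f.symm (τ (f ⟨x, px⟩)) = ⟨x, px⟩ := Subtype.ext hap.symm
        have : τ (f ⟨x, px⟩) = f ⟨x, px⟩ := by
          have := congrArg f this
          simpa using this
        exact hτf _ this
      · exact iff_of_true (hg_not τ x px) (not_not.1 px)
    · rw [hsign]; exact hτP
  · -- left inverse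
    intro σ hσ
    obtain ⟨-, ⟨-, hfix⟩, -⟩ := Finset.mem_filter.1 hσ
    exact hgj σ (hh1 σ hfix) (h2of σ hfix)
  · -- right inverse
    intro τ hτ
    refine hjg τ (fun x => ?_)
    by_cases hx : p x
    · refine iff_of_true hx ?_
      have hx' := hg_apply τ ⟨x, hx⟩
      rw [show ((⟨x, hx⟩ : {x : Fin (r+n) // p x}) : Fin (r+n)) = x from rfl] at hx'
      rw [hx']; exact Subtype.property _
    · refine iff_of_false hx ?_
      rw [hg_not τ x hx]; exact hx


private lemma master_count (r u m n : ℕ) (hu : u ≤ r) (hm : m ≤ n) (P : ℕ → Prop) :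
    ((Drum r u m n).filter (fun σ => P (parity σ))).card
      = Nat.choose r u * Nat.choose n m *
        ((rDerSet (r-u) (n-m)).filter (fun σ => P (parity σ))).card := by
  classical
  set pairs := (((Finset.univ : Finset (Fin (r+n))).filter
        (fun x : Fin (r+n) => (x:ℕ) < r)).powersetCard u) ×ˢ
      (((Finset.univ : Finset (Fin (r+n))).filter
        (fun x : Fin (r+n) => r ≤ (x:ℕ))).powersetCard m) with hpairs
  have H : ∀ σ ∈ (Drum r u m n).filter (fun σ => P (parity σ)),
      ((Finset.univ.filter (fun z : Fin (r+n) => (z:ℕ) < r ∧ σ z = z)),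
       (Finset.univ.filter (fun z : Fin (r+n) => r ≤ (z:ℕ) ∧ σ z = z))) ∈ pairs := by
    intro σ hσ
    rw [Finset.mem_filter, Drum, Finset.mem_filter] at hσ
    obtain ⟨⟨-, -, hcu, hcm⟩, -⟩ := hσ
    rw [hpairs, Finset.mem_product, Finset.mem_powersetCard, Finset.mem_powersetCard]
    refine ⟨⟨?_, hcu⟩, ?_, hcm⟩
    · intro z hz
      rw [Finset.mem_filter] at hz ⊢
      exact ⟨hz.1, hz.2.1⟩
    · intro z hz
      rw [Finset.mem_filter] at hz ⊢
      exact ⟨hz.1, hz.2.1⟩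
  rw [Finset.card_eq_sum_card_fiberwise H]
  have step : ∀ ST ∈ pairs,
      (((Drum r u m n).filter (fun σ => P (parity σ))).filter
        (fun σ => ((Finset.univ.filter (fun z : Fin (r+n) => (z:ℕ) < r ∧ σ z = z)),
          (Finset.univ.filter (fun z : Fin (r+n) => r ≤ (z:ℕ) ∧ σ z = z))) = ST)).card
      = ((rDerSet (r-u) (n-m)).filter (fun σ => P (parity σ))).card := by
    rintro ⟨S, T⟩ hST
    rw [hpairs, Finset.mem_product, Finset.mem_powersetCard, Finset.mem_powersetCard] at hST
    obtain ⟨⟨hSsub, hSc⟩, hTsub, hTc⟩ := hST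
    have hS : ∀ x ∈ S, (x:ℕ) < r := fun x hx => (Finset.mem_filter.1 (hSsub hx)).2
    have hT : ∀ x ∈ T, r ≤ (x:ℕ) := fun x hx => (Finset.mem_filter.1 (hTsub hx)).2
    rw [← fiber_card_eq r u m n hu hm S T hS hSc hT hTc P]
    congr 1
    rw [Finset.filter_filter, Drum, Finset.filter_filter]
    apply Finset.filter_congr
    intro σ _
    simp only [Prod.mk.injEq]
    constructor
    · rintro ⟨⟨hcyc, hcu, hcm⟩, hP, hLS, hHT⟩
      refine ⟨⟨hcyc, ?_⟩, hP⟩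
      intro x
      constructor
      · intro hfx
        by_cases hx : (x:ℕ) < r
        · left; rw [← hLS, Finset.mem_filter]; exact ⟨Finset.mem_univ _, hx, hfx⟩
        · right; rw [← hHT, Finset.mem_filter]; exact ⟨Finset.mem_univ _, not_lt.1 hx, hfx⟩
      · rintro (hx | hx)
        · rw [← hLS, Finset.mem_filter] at hx; exact hx.2.2
        · rw [← hHT, Finset.mem_filter] at hx; exact hx.2.2
    · rintro ⟨⟨hcyc, hfix⟩, hP⟩
      have hLS : (Finset.univ.filter (fun z : Fin (r+n) => (z:ℕ) < r ∧ σ z = z)) = S := by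
        ext z
        rw [Finset.mem_filter]
        constructor
        · rintro ⟨-, hzr, hfz⟩
          rcases (hfix z).1 hfz with h | h
          · exact h
          · exact absurd (hT z h) (by omega)
        · intro hz
          exact ⟨Finset.mem_univ _, hS z hz, (hfix z).2 (Or.inl hz)⟩
      have hHT : (Finset.univ.filter (fun z : Fin (r+n) => r ≤ (z:ℕ) ∧ σ z = z)) = T := by
        ext z
        rw [Finset.mem_filter]
        constructor
        · rintro ⟨-, hzr, hfz⟩
          rcases (hfix z).1 hfz with h | h
          · exact absurd (hS z h) (by omega)
          · exact h
        · intro hz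
          exact ⟨Finset.mem_univ _, hT z hz, (hfix z).2 (Or.inr hz)⟩
      refine ⟨⟨hcyc, by rw [hLS, hSc], by rw [hHT, hTc]⟩, hP, hLS, hHT⟩
  rw [Finset.sum_congr rfl step, Finset.sum_const, smul_eq_mul]
  congr 1
  rw [hpairs, Finset.card_product, Finset.card_powersetCard, Finset.card_powersetCard,
    card_filter_lt_fin, card_filter_ge_fin]

end AuxDrum

theorem Drum_card_eq (r u m n i : ℕ) (hu : u ≤ r) (hm : m ≤ n) (hi : i ≤ 1) :
    (Drum r u m n).card = Nat.choose r u * Nat.choose n m * Dr (r - u) (n - m) ∧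
    ((Drum r u m n).filter (fun σ => parity σ = i)).card =
      Nat.choose r u * Nat.choose n m * Dri (r - u) i (n - m) := by
  constructor
  · have h := master_count r u m n hu hm (fun _ => True)
    simpa [Dr] using h
  · have h := master_count r u m n hu hm (fun k => k = i)
    rw [Dri]
    convert h using 3 <;> congr!
end
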